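/- arXiv:math/0211017 — 5 statements merged into one kernel-verified Lean document; each statement's English description precedes it below -/
import Mathlib

section
/- Let A and B be graded-commutative real Poincaré duality algebras of formal dimensions 2n₁ and 2n₂, with distinguished classes ω₁ ∈ A², ω₂ ∈ B². Set n = n₁ + n₂ and ω = ω₁⊗1 + 1⊗ω₂ in the graded tensor product A ⊗ B. For any s ≤ n − 1: if multiplication by ω^{n-i} is an isomorphism (A⊗B)^i → (A⊗B)^{2n-i} for all i ≤ s, then multiplication by ω₁^{n₁-i} is an isomorphism A^i → A^{2n₁-i} for all i ≤ min(s, n₁−1). -/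
/-!
Let `a ∈ A^i` with `ω₁ ^ (n₁ - i) a = 0`. Since `ω₁ ⊗ 1` and `1 ⊗ ω₂` commute, the binomial
expansion of `ω ^ (n - i) (a ⊗ 1)` is a sum of multiples of `ω₁ ^ p a ⊗ ω₂ ^ q` with
`p + q = n - i`, and each of these vanishes: either `p ≥ n₁ - i`, or `q > n₂` and `ω₂ ^ q` lies
above the top degree of `B`. So Lefschetz injectivity on `A ⊗ B` forces `a ⊗ 1 = 0`, i.e. `a = 0`.
Poincaré duality gives `dim A^i = dim A^{2n₁-i}`, which upgrades injectivity to bijectivity.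
-/

open Module

theorem Commute.add_pow_mul_eq_zero_of_add_le_succ {R : Type*} [Semiring R] {x y z : R}
    (hxy : Commute x y) (hyz : Commute y z) {m n k : ℕ} (hx : x ^ m * z = 0) (hy : y ^ n = 0)
    (h : m + n ≤ k + 1) : (x + y) ^ k * z = 0 := by
  rw [hxy.add_pow', Finset.sum_mul]
  refine Finset.sum_eq_zero fun ⟨i, j⟩ hij => ?_
  rw [smul_mul_assoc]
  suffices x ^ i * y ^ j * z = 0 by rw [this, smul_zero]
  by_cases hi : m ≤ i
  · rw [mul_assoc, (hyz.pow_left j).eq, ← mul_assoc, ← Nat.sub_add_cancel hi, pow_add,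
      mul_assoc (x ^ (i - m)), hx, mul_zero, zero_mul]
  · have hj : n ≤ j := by linarith [Finset.HasAntidiagonal.mem_antidiagonal.mp hij]
    rw [pow_eq_zero_of_le hj hy, mul_zero, zero_mul]

theorem LinearMap.exists_apply_eq_of_injOn_of_finrank_eq {K V W : Type*} [DivisionRing K]
    [AddCommGroup V] [Module K V] [AddCommGroup W] [Module K W]
    [FiniteDimensional K V] [FiniteDimensional K W] (φ : V →ₗ[K] W)
    {p : Submodule K V} {q : Submodule K W} (hmaps : ∀ x ∈ p, φ x ∈ q)
    (hinj : ∀ x ∈ p, φ x = 0 → x = 0) (hrank : finrank K p = finrank K q) :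
    ∀ y ∈ q, ∃ x ∈ p, φ x = y := by
  have hres : Function.Injective (φ.restrict hmaps) :=
    (injective_iff_map_eq_zero _).mpr fun x hx =>
      Subtype.ext (hinj x x.2 (congrArg Subtype.val hx))
  intro y hy
  obtain ⟨x, hx⟩ := (injective_iff_surjective_of_finrank_eq_finrank hrank).mp hres ⟨y, hy⟩
  exact ⟨x, x.2, congrArg Subtype.val hx⟩

theorem injective_left_of_injective_lift_mul {K A B T : Type*} [Field K]
    [Ring A] [Algebra K A] [Ring B] [Algebra K B] [Nontrivial B] [Ring T] [Algebra K T]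
    (f : A →ₐ[K] T) (g : B →ₐ[K] T)
    (h : Function.Injective
      (TensorProduct.lift ((LinearMap.mul K T).compl₁₂ f.toLinearMap g.toLinearMap))) :
    Function.Injective f := by
  have hf : ⇑f = TensorProduct.lift ((LinearMap.mul K T).compl₁₂ f.toLinearMap g.toLinearMap) ∘
      Algebra.TensorProduct.includeLeft (S := K) (B := B) := by
    ext a
    simp
  rw [hf]
  exact h.comp (Algebra.TensorProduct.includeLeft_injective (algebraMap K B).injective)

section PoincareDuality

variable {K A : Type*} [Field K] [Ring A] [Algebra K A] [FiniteDimensional K A]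

theorem finrank_le_finrank_of_mul_nondegenerate {ι : Type*} [AddMonoid ι]
    (𝒜 : ι → Submodule K A) [SetLike.GradedMonoid 𝒜] {k l : ι}
    (htop : finrank K (𝒜 (k + l)) = 1)
    (hnd : ∀ a ∈ 𝒜 k, (∀ b ∈ 𝒜 l, a * b = 0) → a = 0) :
    finrank K (𝒜 k) ≤ finrank K (𝒜 l) := by
  let pairing : 𝒜 k →ₗ[K] 𝒜 l →ₗ[K] 𝒜 (k + l) :=
    LinearMap.codRestrict₂ ((LinearMap.mul K A).compl₁₂ (𝒜 k).subtype (𝒜 l).subtype)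
      (𝒜 (k + l)).subtype Subtype.val_injective
      fun a b => by simpa using SetLike.mul_mem_graded a.2 b.2
  have hpairing : Function.Injective pairing := by
    refine (injective_iff_map_eq_zero _).mpr fun a ha => Subtype.ext (hnd a a.2 fun b hb => ?_)
    have hab : (𝒜 (k + l)).subtype (pairing a ⟨b, hb⟩) = a * b :=
      LinearMap.codRestrict₂_apply _ _ _ _ a (⟨b, hb⟩ : 𝒜 l)
    rw [ha] at hab
    simpa using hab.symm
  calc finrank K (𝒜 k) ≤ finrank K (𝒜 l →ₗ[K] 𝒜 (k + l)) :=
        LinearMap.finrank_le_finrank_of_injective hpairing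
    _ = finrank K (𝒜 l) := by rw [finrank_linearMap, htop, mul_one]

theorem finrank_eq_finrank_sub_of_poincareDuality (𝒜 : ℕ → Submodule K A)
    [SetLike.GradedMonoid 𝒜] (N : ℕ) (htop : finrank K (𝒜 N) = 1)
    (hnd : ∀ k, k ≤ N → ∀ a ∈ 𝒜 k, (∀ b ∈ 𝒜 (N - k), a * b = 0) → a = 0)
    {k : ℕ} (hk : k ≤ N) : finrank K (𝒜 k) = finrank K (𝒜 (N - k)) := by
  refine le_antisymm ?_ ?_
  · refine finrank_le_finrank_of_mul_nondegenerate 𝒜 ?_ (hnd k hk)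
    rwa [Nat.add_sub_cancel' hk]
  · refine finrank_le_finrank_of_mul_nondegenerate 𝒜 ?_ ?_
    · rwa [Nat.sub_add_cancel hk]
    · simpa [Nat.sub_sub_self hk] using hnd (N - k) (Nat.sub_le N k)

end PoincareDuality

theorem stmt2_general {A B T : Type*} [Ring A] [Algebra ℝ A] [Ring B] [Algebra ℝ B]
    [Ring T] [Algebra ℝ T]
    [FiniteDimensional ℝ A]
    (𝒜 : ℕ → Submodule ℝ A) (ℬ : ℕ → Submodule ℝ B) (𝒯 : ℕ → Submodule ℝ T)
    [GradedRing 𝒜] [GradedRing ℬ]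
    (n₁ n₂ : ℕ) (ω₁ : A) (ω₂ : B) (hω₁ : ω₁ ∈ 𝒜 2) (hω₂ : ω₂ ∈ ℬ 2)
    -- Poincaré duality algebra structure on A
    (hdimA : Module.finrank ℝ (𝒜 (2 * n₁)) = 1)
    (hndA : ∀ k, k ≤ 2 * n₁ → ∀ a ∈ 𝒜 k,
      (∀ b ∈ 𝒜 (2 * n₁ - k), a * b = 0) → a = 0)
    -- Poincaré duality algebra structure on B
    (htopB : ∀ k, 2 * n₂ < k → ℬ k = ⊥)
    (hdimB : Module.finrank ℝ (ℬ (2 * n₂)) = 1)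
    -- T is the graded tensor product of A and B
    (f : A →ₐ[ℝ] T) (g : B →ₐ[ℝ] T)
    (hf : ∀ i, ∀ a ∈ 𝒜 i, f a ∈ 𝒯 i)
    (hkoszul : ∀ i j : ℕ, ∀ a ∈ 𝒜 i, ∀ b ∈ ℬ j,
      g b * f a = ((-1 : ℝ) ^ (i * j)) • (f a * g b))
    (htens : Function.Bijective
      (TensorProduct.lift ((LinearMap.mul ℝ T).compl₁₂ f.toLinearMap g.toLinearMap)))
    -- the s-Lefschetz hypothesis on T
    (s : ℕ)
    (hL : ∀ i, i ≤ s →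
      (∀ t ∈ 𝒯 i, (f ω₁ + g ω₂) ^ (n₁ + n₂ - i) * t = 0 → t = 0) ∧
      (∀ u ∈ 𝒯 (2 * (n₁ + n₂) - i), ∃ t ∈ 𝒯 i,
        (f ω₁ + g ω₂) ^ (n₁ + n₂ - i) * t = u)) :
    ∀ i, i ≤ min s (n₁ - 1) →
      (∀ a ∈ 𝒜 i, ω₁ ^ (n₁ - i) * a = 0 → a = 0) ∧
      (∀ b ∈ 𝒜 (2 * n₁ - i), ∃ a ∈ 𝒜 i, ω₁ ^ (n₁ - i) * a = b) := by
  intro i hi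
  have his : i ≤ s := hi.trans (min_le_left _ _)
  have hin : i ≤ n₁ := (hi.trans (min_le_right _ _)).trans (Nat.sub_le _ _)
  have : Nontrivial (ℬ (2 * n₂)) := Module.nontrivial_of_finrank_pos (hdimB ▸ one_pos)
  have : Nontrivial B := (ℬ (2 * n₂)).injective_subtype.nontrivial
  have hfinj := injective_left_of_injective_lift_mul f g htens.injective
  have hcomm : ∀ j, ∀ a ∈ 𝒜 j, Commute (g ω₂) (f a) := fun j a ha =>
    show g ω₂ * f a = f a * g ω₂ by
      simpa only [pow_mul', neg_one_sq, one_pow, one_smul] using hkoszul j 2 a ha ω₂ hω₂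
  have hω₂_pow : g ω₂ ^ (n₂ + 1) = 0 := by
    have hmem := SetLike.pow_mem_graded (n₂ + 1) hω₂
    rw [htopB _ (by rw [smul_eq_mul]; omega), Submodule.mem_bot] at hmem
    rw [← map_pow, hmem, map_zero]
  have hinj : ∀ a ∈ 𝒜 i, ω₁ ^ (n₁ - i) * a = 0 → a = 0 := fun a ha h0 =>
    hfinj <| by
      rw [map_zero]
      refine (hL i his).1 _ (hf i a ha) ?_
      refine (hcomm 2 ω₁ hω₁).symm.add_pow_mul_eq_zero_of_add_le_succ (m := n₁ - i)
        (hcomm i a ha) ?_ hω₂_pow (by omega)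
      rw [← map_pow, ← map_mul, h0, map_zero]
  have hmaps : ∀ a ∈ 𝒜 i, ω₁ ^ (n₁ - i) * a ∈ 𝒜 (2 * n₁ - i) := fun a ha => by
    have hmem := SetLike.mul_mem_graded (SetLike.pow_mem_graded (n₁ - i) hω₁) ha
    rwa [smul_eq_mul, show (n₁ - i) * 2 + i = 2 * n₁ - i by omega] at hmem
  exact ⟨hinj, (LinearMap.mulLeft ℝ (ω₁ ^ (n₁ - i))).exists_apply_eq_of_injOn_of_finrank_eq hmaps
    hinj (finrank_eq_finrank_sub_of_poincareDuality 𝒜 (2 * n₁) hdimA hndA (by omega))⟩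

/-- If `A`, `B` are graded-commutative real Poincaré duality
algebras of formal dimensions `2n₁`, `2n₂` with classes `ω₁ ∈ A²`, `ω₂ ∈ B²`,
and `T` realises the graded tensor product `A ⊗ B` (via graded algebra maps
`f, g` with the Koszul commutation rule, whose induced map `A ⊗ B → T` is a
linear bijection), then for `n = n₁ + n₂`, `ω = ω₁⊗1 + 1⊗ω₂` and `s ≤ n - 1`:
if multiplication by `ω^(n-i)` is an isomorphism `(A⊗B)^i → (A⊗B)^{2n-i}` for
all `i ≤ s`, then multiplication by `ω₁^(n₁-i)` is an isomorphism
`A^i → A^{2n₁-i}` for all `i ≤ min s (n₁ - 1)`. -/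
theorem stmt2 {A B T : Type*} [Ring A] [Algebra ℝ A] [Ring B] [Algebra ℝ B]
    [Ring T] [Algebra ℝ T]
    [FiniteDimensional ℝ A] [FiniteDimensional ℝ B]
    (𝒜 : ℕ → Submodule ℝ A) (ℬ : ℕ → Submodule ℝ B) (𝒯 : ℕ → Submodule ℝ T)
    [GradedRing 𝒜] [GradedRing ℬ] [GradedRing 𝒯]
    (n₁ n₂ : ℕ) (ω₁ : A) (ω₂ : B) (hω₁ : ω₁ ∈ 𝒜 2) (hω₂ : ω₂ ∈ ℬ 2)
    -- Poincaré duality algebra structure on A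
    (htopA : ∀ k, 2 * n₁ < k → 𝒜 k = ⊥)
    (hcommA : ∀ i j : ℕ, ∀ a ∈ 𝒜 i, ∀ b ∈ 𝒜 j,
      a * b = ((-1 : ℝ) ^ (i * j)) • (b * a))
    (hdimA : Module.finrank ℝ (𝒜 (2 * n₁)) = 1)
    (hndA : ∀ k, k ≤ 2 * n₁ → ∀ a ∈ 𝒜 k,
      (∀ b ∈ 𝒜 (2 * n₁ - k), a * b = 0) → a = 0)
    -- Poincaré duality algebra structure on B
    (htopB : ∀ k, 2 * n₂ < k → ℬ k = ⊥)
    (hcommB : ∀ i j : ℕ, ∀ a ∈ ℬ i, ∀ b ∈ ℬ j,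
      a * b = ((-1 : ℝ) ^ (i * j)) • (b * a))
    (hdimB : Module.finrank ℝ (ℬ (2 * n₂)) = 1)
    (hndB : ∀ k, k ≤ 2 * n₂ → ∀ a ∈ ℬ k,
      (∀ b ∈ ℬ (2 * n₂ - k), a * b = 0) → a = 0)
    -- T is the graded tensor product of A and B
    (f : A →ₐ[ℝ] T) (g : B →ₐ[ℝ] T)
    (hf : ∀ i, ∀ a ∈ 𝒜 i, f a ∈ 𝒯 i) (hg : ∀ j, ∀ b ∈ ℬ j, g b ∈ 𝒯 j)
    (hkoszul : ∀ i j : ℕ, ∀ a ∈ 𝒜 i, ∀ b ∈ ℬ j,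
      g b * f a = ((-1 : ℝ) ^ (i * j)) • (f a * g b))
    (htens : Function.Bijective
      (TensorProduct.lift ((LinearMap.mul ℝ T).compl₁₂ f.toLinearMap g.toLinearMap)))
    (hspan : ∀ k, 𝒯 k = ⨆ p : {p : ℕ × ℕ // p.1 + p.2 = k},
      Submodule.span ℝ {z | ∃ a ∈ 𝒜 p.1.1, ∃ b ∈ ℬ p.1.2, z = f a * g b})
    -- the s-Lefschetz hypothesis on T
    (s : ℕ) (hs : s ≤ n₁ + n₂ - 1)
    (hL : ∀ i, i ≤ s →
      (∀ t ∈ 𝒯 i, (f ω₁ + g ω₂) ^ (n₁ + n₂ - i) * t = 0 → t = 0) ∧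
      (∀ u ∈ 𝒯 (2 * (n₁ + n₂) - i), ∃ t ∈ 𝒯 i,
        (f ω₁ + g ω₂) ^ (n₁ + n₂ - i) * t = u)) :
    ∀ i, i ≤ min s (n₁ - 1) →
      (∀ a ∈ 𝒜 i, ω₁ ^ (n₁ - i) * a = 0 → a = 0) ∧
      (∀ b ∈ 𝒜 (2 * n₁ - i), ∃ a ∈ 𝒜 i, ω₁ ^ (n₁ - i) * a = b) :=
  stmt2_general 𝒜 ℬ 𝒯 n₁ n₂ ω₁ ω₂ hω₁ hω₂ hdimA hndA htopB hdimB f g hf hkoszul htens s hL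
end

section
/- In the setting above with A s-Lefschetz for s ≤ n−2, for each p = 2(n−1)−i with i ≤ s, the map j induces an isomorphism of vector spaces A^p / ker(ω·(−) : A^p → A^{p+2}) ≅ B^p; moreover ω·(−) : A^p → A^{p+2} is surjective, so dim B^p = dim A^{p+2} = dim A^i. -/
/-! The transpose of `z ↦ z * ω : A^p → A^{p+2}` under Poincaré duality is `x ↦ ω * x` on `A^i`
(as `p + 2 + i = 2n`), which the Lefschetz property makes injective; so `ω` maps `A^p` onto
`A^{p+2}`. The identity `∫_B j(a) j(z) = k ∫_A a z ω` for `a ∈ A^i`, `z ∈ A^p`, together with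
`j : A^i → B^i` being onto and Poincaré duality in `B`, shows that `j z = 0 ↔ z ω = 0` on `A^p` and
that `j : A^p → B^p` is onto. Hence `B^p ≅ A^p / ker ω ≅ A^{p+2}`, and Poincaré duality in `A`
gives `dim A^{p+2} = dim A^i`. -/

open Module LinearMap

lemma LinearMap.surjective_restrict_iff {R M M₁ : Type*} [Semiring R] [AddCommMonoid M]
    [Module R M] [AddCommMonoid M₁] [Module R M₁] (f : M →ₗ[R] M₁) {p : Submodule R M}
    {q : Submodule R M₁} (hf : ∀ x ∈ p, f x ∈ q) :
    Function.Surjective (f.restrict hf) ↔ ∀ y ∈ q, ∃ x ∈ p, f x = y := by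
  refine ⟨fun h y hy => ?_, fun h y => ?_⟩
  · obtain ⟨x, hx⟩ := h ⟨y, hy⟩
    exact ⟨x, x.2, congrArg Subtype.val hx⟩
  · obtain ⟨x, hx, hxy⟩ := h y y.2
    exact ⟨⟨x, hx⟩, Subtype.ext hxy⟩

lemma LinearMap.finrank_eq_of_ker_eq {R U W X : Type*} [Ring R] [AddCommGroup U] [Module R U]
    [AddCommGroup W] [Module R W] [AddCommGroup X] [Module R X] (f : U →ₗ[R] W)
    (g : U →ₗ[R] X) (hf : Function.Surjective f) (hg : Function.Surjective g)
    (h : ker f = ker g) : finrank R W = finrank R X :=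
  ((f.quotKerEquivOfSurjective hf).symm.trans
    ((Submodule.quotEquivOfEq _ _ h).trans (g.quotKerEquivOfSurjective hg))).finrank_eq

lemma LinearMap.surjective_of_isPerfPair {K U W X : Type*} [Field K] [AddCommGroup U]
    [Module K U] [AddCommGroup W] [Module K W] [AddCommGroup X] [Module K X]
    (Q : W →ₗ[K] X →ₗ[K] K) [Q.IsPerfPair] (f : U →ₗ[K] W)
    (h : ∀ x, (∀ u, Q (f u) x = 0) → x = 0) : Function.Surjective f := by
  rw [← dualMap_injective_iff, ← ker_eq_bot, ker_eq_bot']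
  intro φ hφ
  obtain ⟨x, rfl⟩ := (IsPerfPair.bijective_right Q).surjective φ
  rw [h x fun u => LinearMap.congr_fun hφ u, map_zero]

section Poincare

variable {K A ι : Type*} [Field K] [Ring A] [Algebra K A] [AddCommMonoid ι]

def gradedPairing (τ : A →ₗ[K] K) (P Q : Submodule K A) : P →ₗ[K] Q →ₗ[K] K :=
  ((LinearMap.mul K A).compl₁₂ P.subtype Q.subtype).compr₂ τ

@[simp]
lemma gradedPairing_apply (τ : A →ₗ[K] K) (P Q : Submodule K A) (a : P) (b : Q) :
    gradedPairing τ P Q a b = τ (a * b) := rfl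

def IsPoincarePairing (𝒜 : ι → Submodule K A) (τ : A →ₗ[K] K) (N : ι) : Prop :=
  ∀ p q, p + q = N → ∀ a ∈ 𝒜 p, (∀ b ∈ 𝒜 q, τ (a * b) = 0) → a = 0

namespace IsPoincarePairing

variable {𝒜 : ι → Submodule K A} {τ : A →ₗ[K] K} {N p q : ι}

lemma injective_gradedPairing (h : IsPoincarePairing 𝒜 τ N) (hpq : p + q = N) :
    Function.Injective (gradedPairing τ (𝒜 p) (𝒜 q)) :=
  injective_iff_map_eq_zero _ |>.2 fun a ha =>
    Subtype.ext <| h p q hpq a a.2 fun b hb => LinearMap.congr_fun ha ⟨b, hb⟩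

variable [FiniteDimensional K A]

lemma finrank_le (h : IsPoincarePairing 𝒜 τ N) (hpq : p + q = N) :
    finrank K (𝒜 p) ≤ finrank K (𝒜 q) :=
  Subspace.dual_finrank_eq (K := K) (V := 𝒜 q) ▸
    finrank_le_finrank_of_injective (h.injective_gradedPairing hpq)

lemma finrank_eq (h : IsPoincarePairing 𝒜 τ N) (hpq : p + q = N) :
    finrank K (𝒜 p) = finrank K (𝒜 q) :=
  (h.finrank_le hpq).antisymm (h.finrank_le (add_comm p q ▸ hpq))

/-- `A` need not be commutative, so only left nondegeneracy is assumed; applied in degrees `p, q`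
and `q, p` it forces equal dimensions, which makes the pairing perfect. -/
lemma isPerfPair (h : IsPoincarePairing 𝒜 τ N) (hpq : p + q = N) :
    (gradedPairing τ (𝒜 p) (𝒜 q)).IsPerfPair := by
  have hinj := h.injective_gradedPairing hpq
  refine .of_bijective _ ⟨hinj, ?_⟩
  rwa [← injective_iff_surjective_of_finrank_eq_finrank]
  rw [Subspace.dual_finrank_eq, h.finrank_eq hpq]

lemma eq_zero_of_forall_mul_left (h : IsPoincarePairing 𝒜 τ N)
    (hpq : p + q = N) {b : A} (hb : b ∈ 𝒜 q) (hb0 : ∀ a ∈ 𝒜 p, τ (a * b) = 0) : b = 0 := by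
  have := h.isPerfPair hpq
  have := (IsPerfPair.bijective_right (gradedPairing τ (𝒜 p) (𝒜 q))).injective
    (a₁ := ⟨b, hb⟩) (a₂ := 0) (LinearMap.ext fun a => by simpa using hb0 a a.2)
  exact congrArg Subtype.val this

lemma surjective_of_forall_mul_left {U : Type*} [AddCommGroup U] [Module K U]
    (h : IsPoincarePairing 𝒜 τ N) (hpq : p + q = N) (f : U →ₗ[K] 𝒜 q)
    (hf : ∀ a ∈ 𝒜 p, (∀ u, τ (a * f u) = 0) → a = 0) : Function.Surjective f := by
  have := h.isPerfPair hpq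
  exact (gradedPairing τ (𝒜 p) (𝒜 q)).flip.surjective_of_isPerfPair f fun a ha =>
    Subtype.ext <| hf a a.2 ha

lemma surjective_of_forall_mul_right {U : Type*} [AddCommGroup U] [Module K U]
    (h : IsPoincarePairing 𝒜 τ N) (hpq : p + q = N) (f : U →ₗ[K] 𝒜 p)
    (hf : ∀ b ∈ 𝒜 q, (∀ u, τ (f u * b) = 0) → b = 0) : Function.Surjective f := by
  have := h.isPerfPair hpq
  exact (gradedPairing τ (𝒜 p) (𝒜 q)).surjective_of_isPerfPair f fun b hb =>
    Subtype.ext <| hf b b.2 hb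

end IsPoincarePairing

end Poincare

section Hyperplane

variable {K A B ι : Type*} [Field K] [Ring A] [Algebra K A] [Ring B] [Algebra K B]
  [AddCommMonoid ι] {𝒜 : ι → Submodule K A} {ℬ : ι → Submodule K B}

def gradedMulRight (𝒜 : ι → Submodule K A) [SetLike.GradedMonoid 𝒜] {ω : A} {d : ι}
    (hω : ω ∈ 𝒜 d) (p : ι) : 𝒜 p →ₗ[K] 𝒜 (p + d) :=
  (LinearMap.mulRight K ω).restrict fun _ hz => SetLike.mul_mem_graded hz hω

@[simp]
lemma coe_gradedMulRight [SetLike.GradedMonoid 𝒜] {ω : A} {d : ι} (hω : ω ∈ 𝒜 d) {p : ι}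
    (z : 𝒜 p) : (gradedMulRight 𝒜 hω p z : A) = z * ω := rfl

lemma gradedMulRight_surjective [FiniteDimensional K A] [SetLike.GradedMonoid 𝒜]
    {τ : A →ₗ[K] K} {N i p d : ι} {ω : A} (hA : IsPoincarePairing 𝒜 τ N)
    (hN : i + (p + d) = N) (hω : ω ∈ 𝒜 d) (hω_inj : ∀ x ∈ 𝒜 i, ω * x = 0 → x = 0) :
    Function.Surjective (gradedMulRight 𝒜 hω p) := by
  refine hA.surjective_of_forall_mul_right (add_comm i _ ▸ hN) _ fun x hx h0 => hω_inj x hx ?_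
  refine hA.eq_zero_of_forall_mul_left (p := p) (by rw [← hN, add_left_comm])
    (add_comm d i ▸ SetLike.mul_mem_graded hω hx) fun z hz => ?_
  simpa [mul_assoc] using h0 ⟨z, hz⟩

variable [SetLike.GradedMonoid 𝒜] {τA : A →ₗ[K] K} {τB : B →ₗ[K] K} {j : A →ₐ[K] B}
  {ω : A} {k : K} {N M i p d : ι}

lemma integral_map_mul_map (hint : ∀ x ∈ 𝒜 M, τB (j x) = k * τA (x * ω)) (hM : i + p = M)
    {a z : A} (ha : a ∈ 𝒜 i) (hz : z ∈ 𝒜 p) : τB (j a * j z) = k * τA (a * (z * ω)) := by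
  rw [← map_mul, hint _ (hM ▸ SetLike.mul_mem_graded ha hz), mul_assoc]

lemma map_eq_zero_iff_mul_eq_zero [FiniteDimensional K A] [FiniteDimensional K B]
    (hA : IsPoincarePairing 𝒜 τA N) (hB : IsPoincarePairing ℬ τB M) (hN : i + (p + d) = N) (hM : i + p = M) (hω : ω ∈ 𝒜 d)
    (hk : k ≠ 0) (hj : ∀ x ∈ 𝒜 p, j x ∈ ℬ p)
    (hj_surj : ∀ y ∈ ℬ i, ∃ x ∈ 𝒜 i, j x = y) (hint : ∀ x ∈ 𝒜 M, τB (j x) = k * τA (x * ω))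
    {z : A} (hz : z ∈ 𝒜 p) : j z = 0 ↔ z * ω = 0 := by
  constructor
  · intro hjz
    refine hA.eq_zero_of_forall_mul_left hN (SetLike.mul_mem_graded hz hω) fun a ha => ?_
    have := integral_map_mul_map hint hM ha hz
    rwa [hjz, mul_zero, map_zero, eq_comm, mul_eq_zero, or_iff_right hk] at this
  · intro hzω
    refine hB.eq_zero_of_forall_mul_left hM (hj z hz) fun b hb => ?_
    obtain ⟨a, ha, rfl⟩ := hj_surj b hb
    rw [integral_map_mul_map hint hM ha hz, hzω, mul_zero, map_zero, mul_zero]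

lemma restrict_surjective_of_gradedMulRight_surjective [FiniteDimensional K B]
    (hA : IsPoincarePairing 𝒜 τA N) (hB : IsPoincarePairing ℬ τB M) (hN : i + (p + d) = N) (hM : i + p = M) (hω : ω ∈ 𝒜 d)
    (hk : k ≠ 0) (hj : ∀ x ∈ 𝒜 p, j x ∈ ℬ p)
    (hj_surj : ∀ y ∈ ℬ i, ∃ x ∈ 𝒜 i, j x = y) (hint : ∀ x ∈ 𝒜 M, τB (j x) = k * τA (x * ω))
    (hω_surj : Function.Surjective (gradedMulRight 𝒜 hω p)) :
    Function.Surjective (j.toLinearMap.restrict hj) := by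
  refine hB.surjective_of_forall_mul_left hM _ fun y hy hy0 => ?_
  obtain ⟨a, ha, rfl⟩ := hj_surj y hy
  suffices a = 0 by rw [this, map_zero]
  refine hA i (p + d) hN a ha fun w hw => ?_
  obtain ⟨z, hzw⟩ := hω_surj ⟨w, hw⟩
  have h0 : τB (j a * j z) = 0 := hy0 z
  rwa [integral_map_mul_map hint hM ha z.2, ← coe_gradedMulRight hω, hzw, mul_eq_zero,
    or_iff_right hk] at h0

end Hyperplane

theorem stmt7_general {A B : Type*} [Ring A] [Algebra ℝ A] [Ring B] [Algebra ℝ B]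
    [FiniteDimensional ℝ A] [FiniteDimensional ℝ B]
    (𝒜 : ℕ → Submodule ℝ A) (ℬ : ℕ → Submodule ℝ B)
    [GradedRing 𝒜]
    (n : ℕ) (hn : 2 ≤ n) (ω : A) (hω : ω ∈ 𝒜 2) (k : ℝ) (hk : k ≠ 0)
    (intA : A →ₗ[ℝ] ℝ) (intB : B →ₗ[ℝ] ℝ)
    (hndA : ∀ p q, p + q = 2 * n → ∀ a ∈ 𝒜 p,
      (∀ b ∈ 𝒜 q, intA (a * b) = 0) → a = 0)
    (hndB : ∀ p q, p + q = 2 * n - 2 → ∀ a ∈ ℬ p,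
      (∀ b ∈ ℬ q, intB (a * b) = 0) → a = 0)
    (j : A →ₐ[ℝ] B)
    (hjgr : ∀ i, ∀ x ∈ 𝒜 i, j x ∈ ℬ i)
    (hjsurj : ∀ i, i ≤ n - 2 → ∀ y ∈ ℬ i, ∃ x ∈ 𝒜 i, j x = y)
    (hint : ∀ x ∈ 𝒜 (2 * n - 2), intB (j x) = k * intA (x * ω))
    (s : ℕ) (hs : s ≤ n - 2)
    (hLA : ∀ i, i ≤ s →
      (∀ a ∈ 𝒜 i, ω ^ (n - i) * a = 0 → a = 0) ∧
      (∀ b ∈ 𝒜 (2 * n - i), ∃ a ∈ 𝒜 i, ω ^ (n - i) * a = b)) :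
    ∀ i, i ≤ s →
      (∀ z ∈ 𝒜 (2 * (n - 1) - i), (j z = 0 ↔ z * ω = 0)) ∧
      (∀ y ∈ ℬ (2 * (n - 1) - i), ∃ z ∈ 𝒜 (2 * (n - 1) - i), j z = y) ∧
      (∀ w ∈ 𝒜 (2 * (n - 1) - i + 2), ∃ z ∈ 𝒜 (2 * (n - 1) - i), z * ω = w) ∧
      Module.finrank ℝ (ℬ (2 * (n - 1) - i)) =
        Module.finrank ℝ (𝒜 (2 * (n - 1) - i + 2)) ∧
      Module.finrank ℝ (𝒜 (2 * (n - 1) - i + 2)) = Module.finrank ℝ (𝒜 i) := by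
  have hA : IsPoincarePairing 𝒜 intA (2 * n) := hndA
  have hB : IsPoincarePairing ℬ intB (2 * n - 2) := hndB
  intro i hi
  set p := 2 * (n - 1) - i
  have hM : i + p = 2 * n - 2 := by omega
  have hN : i + (p + 2) = 2 * n := by omega
  have hω_inj : ∀ x ∈ 𝒜 i, ω * x = 0 → x = 0 := fun x hx h0 => (hLA i hi).1 x hx <| by
    rw [show n - i = n - i - 1 + 1 by omega, pow_succ, mul_assoc, h0, mul_zero]
  have hj_surj := hjsurj i (hi.trans hs)
  have hR := gradedMulRight_surjective hA hN hω hω_inj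
  have hJ := restrict_surjective_of_gradedMulRight_surjective hA hB hN hM hω hk (hjgr p)
    hj_surj hint hR
  have hker : ∀ z ∈ 𝒜 p, j z = 0 ↔ z * ω = 0 := fun z hz =>
    map_eq_zero_iff_mul_eq_zero hA hB hN hM hω hk (hjgr p) hj_surj hint hz
  refine ⟨hker, (surjective_restrict_iff _ _).1 hJ, (surjective_restrict_iff _ _).1 hR, ?_,
    hA.finrank_eq (by omega)⟩
  refine finrank_eq_of_ker_eq _ _ hJ hR (Submodule.ext fun z => ?_)
  simp only [mem_ker, ← Submodule.coe_eq_zero, coe_gradedMulRight]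
  exact hker z z.2

/-- In the same setting, with `A` `s`-Lefschetz for `s ≤ n-2`,
for each `p = 2(n-1) - i` with `i ≤ s`, the map `j` induces an isomorphism
`A^p / ker(ω·(-)) ≅ B^p`: the kernel of `j` on `A^p` is exactly
`ker(ω·(-))`, `j : A^p → B^p` is surjective, multiplication by `ω` maps `A^p`
onto `A^{p+2}`, and `dim B^p = dim A^{p+2} = dim A^i`. -/
theorem stmt7 {A B : Type*} [Ring A] [Algebra ℝ A] [Ring B] [Algebra ℝ B]
    [FiniteDimensional ℝ A] [FiniteDimensional ℝ B]
    (𝒜 : ℕ → Submodule ℝ A) (ℬ : ℕ → Submodule ℝ B)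
    [GradedRing 𝒜] [GradedRing ℬ]
    (n : ℕ) (hn : 2 ≤ n) (ω : A) (hω : ω ∈ 𝒜 2) (k : ℝ) (hk : k ≠ 0)
    (intA : A →ₗ[ℝ] ℝ) (intB : B →ₗ[ℝ] ℝ)
    (htopA : ∀ m, 2 * n < m → 𝒜 m = ⊥)
    (htopB : ∀ m, 2 * n - 2 < m → ℬ m = ⊥)
    (hndA : ∀ p q, p + q = 2 * n → ∀ a ∈ 𝒜 p,
      (∀ b ∈ 𝒜 q, intA (a * b) = 0) → a = 0)
    (hndB : ∀ p q, p + q = 2 * n - 2 → ∀ a ∈ ℬ p,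
      (∀ b ∈ ℬ q, intB (a * b) = 0) → a = 0)
    (j : A →ₐ[ℝ] B)
    (hjgr : ∀ i, ∀ x ∈ 𝒜 i, j x ∈ ℬ i)
    (hjinj : ∀ i, i ≤ n - 2 → ∀ x ∈ 𝒜 i, j x = 0 → x = 0)
    (hjsurj : ∀ i, i ≤ n - 2 → ∀ y ∈ ℬ i, ∃ x ∈ 𝒜 i, j x = y)
    (hint : ∀ x ∈ 𝒜 (2 * n - 2), intB (j x) = k * intA (x * ω))
    (s : ℕ) (hs : s ≤ n - 2)
    (hLA : ∀ i, i ≤ s →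
      (∀ a ∈ 𝒜 i, ω ^ (n - i) * a = 0 → a = 0) ∧
      (∀ b ∈ 𝒜 (2 * n - i), ∃ a ∈ 𝒜 i, ω ^ (n - i) * a = b)) :
    ∀ i, i ≤ s →
      (∀ z ∈ 𝒜 (2 * (n - 1) - i), (j z = 0 ↔ z * ω = 0)) ∧
      (∀ y ∈ ℬ (2 * (n - 1) - i), ∃ z ∈ 𝒜 (2 * (n - 1) - i), j z = y) ∧
      (∀ w ∈ 𝒜 (2 * (n - 1) - i + 2), ∃ z ∈ 𝒜 (2 * (n - 1) - i), z * ω = w) ∧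
      Module.finrank ℝ (ℬ (2 * (n - 1) - i)) =
        Module.finrank ℝ (𝒜 (2 * (n - 1) - i + 2)) ∧
      Module.finrank ℝ (𝒜 (2 * (n - 1) - i + 2)) = Module.finrank ℝ (𝒜 i) :=
  stmt7_general 𝒜 ℬ n hn ω hω k hk intA intB hndA hndB j hjgr hjsurj hint s hs hLA
end

section
/- Let A = Λ(α,β,γ,η) be the exterior algebra on four degree-1 generators over ℝ with differential d determined by dα = dβ = dη = 0, dγ = −α∧β (the Chevalley–Eilenberg model of the Kodaira–Thurston manifold), and let ω = β∧γ + α∧η. Then ω is closed, ω∧ω ≠ 0 (so ω is a symplectic class), but the class [ω]∧[β] = 0 in H³: i.e., ω∧β is exact. Hence cup product with [ω] : H¹ → H³ is not injective, so this cohomology does not satisfy the 1-Lefschetz property. -/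
/-!
Work in the monomial basis `m s` of `Λ(α, β, γ, η)`. Closedness of `ω` and `β` is read off from
`d`, and `ω ∧ ω = 2 αβγη ≠ 0` because even monomials commute with the generators. Since `d`
kills every basis monomial except `γ` and `γη`, the image of `d` is spanned by `αβ` and `αβη`;
linear independence keeps `β` out of that span, while `ω ∧ β = -αβη = d(γη)`.
-/

theorem LinearMap.range_le_span_pair_of_apply_eq_zero {ι R M N : Type*} [Semiring R]
    [AddCommMonoid M] [AddCommMonoid N] [Module R M] [Module R N] {v : ι → M}
    (hv : Submodule.span R (Set.range v) = ⊤) (f : M →ₗ[R] N) {i j : ι}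
    (h : ∀ k, k ≠ i → k ≠ j → f (v k) = 0) :
    LinearMap.range f ≤ Submodule.span R {f (v i), f (v j)} := by
  rw [LinearMap.range_eq_map, ← hv, Submodule.map_span_le]
  rintro _ ⟨k, rfl⟩
  by_cases hki : k = i
  · exact Submodule.subset_span (.inl (hki ▸ rfl))
  by_cases hkj : k = j
  · exact Submodule.subset_span (.inr (hkj ▸ rfl))
  rw [h k hki hkj]
  exact zero_mem _

section Anticommuting

variable {ι A : Type*} [Ring A] {g : ι → A}

theorem commute_mul_of_anticomm (hanti : ∀ i j, g i * g j = -(g j * g i)) (i j k : ι) :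
    Commute (g i * g j) (g k) := by
  change g i * g j * g k = g k * (g i * g j)
  rw [mul_assoc, hanti j k, mul_neg, ← mul_assoc, hanti i k, neg_mul, neg_neg, mul_assoc]

theorem mul_mul_left_eq_zero_of_anticomm (hanti : ∀ i j, g i * g j = -(g j * g i))
    (hsq : ∀ i, g i * g i = 0) (i j : ι) : g i * g j * g i = 0 := by
  rw [(commute_mul_of_anticomm hanti i j i).eq, ← mul_assoc, hsq, zero_mul]

theorem mul_mul_self_eq_zero_of_anticomm (hanti : ∀ i j, g i * g j = -(g j * g i))
    (hsq : ∀ i, g i * g i = 0) (i j : ι) : g i * g j * (g i * g j) = 0 := by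
  rw [← mul_assoc, mul_mul_left_eq_zero_of_anticomm hanti hsq, zero_mul]

theorem add_mul_self_of_anticomm (hanti : ∀ i j, g i * g j = -(g j * g i))
    (hsq : ∀ i, g i * g i = 0) (a b c e : ι) :
    (g a * g b + g c * g e) * (g a * g b + g c * g e) = 2 • (g a * g b * (g c * g e)) := by
  have hcomm : Commute (g c * g e) (g a * g b) :=
    (commute_mul_of_anticomm hanti c e a).mul_right (commute_mul_of_anticomm hanti c e b)
  rw [add_mul, mul_add, mul_add, mul_mul_self_eq_zero_of_anticomm hanti hsq,
    mul_mul_self_eq_zero_of_anticomm hanti hsq, hcomm.eq, two_nsmul, zero_add, add_zero]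

end Anticommuting

/-- In the Chevalley–Eilenberg model `(Λ(α,β,γ,η), d)` of the
Kodaira–Thurston manifold (`dα = dβ = dη = 0`, `dγ = -α∧β`; on the monomial
basis `d` vanishes except `dγ = -αβ`, `d(γη) = -αβη`), the form
`ω = β∧γ + α∧η` is closed and `ω∧ω ≠ 0`, yet `ω∧β` is exact while `β` is
closed and not exact; hence cup product with `[ω] : H¹ → H³` is not injective
and the 1-Lefschetz property fails.  Here `α = g 0`, `β = g 1`, `γ = g 2`,
`η = g 3`. -/
theorem stmt9 {A : Type*} [Ring A] [Algebra ℝ A] (g : Fin 4 → A)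
    (hanti : ∀ i j, g i * g j = -(g j * g i))
    (m : Finset (Fin 4) → A)
    (hm : ∀ s : Finset (Fin 4), m s = ((s.sort (· ≤ ·)).map g).prod)
    (hindep : LinearIndependent ℝ m)
    (hspan : Submodule.span ℝ (Set.range m) = ⊤)
    (d : A →ₗ[ℝ] A)
    (hd0 : ∀ s : Finset (Fin 4), s ≠ {2} → s ≠ {2, 3} → d (m s) = 0)
    (hdγ : d (m {2}) = -(m {0, 1}))
    (hdγη : d (m {2, 3}) = -(m {0, 1, 3})) :
    d (g 1 * g 2 + g 0 * g 3) = 0 ∧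
    (g 1 * g 2 + g 0 * g 3) * (g 1 * g 2 + g 0 * g 3) ≠ 0 ∧
    d (g 1) = 0 ∧
    (∀ x : A, d x ≠ g 1) ∧
    (∃ x : A, d x = (g 1 * g 2 + g 0 * g 3) * g 1) := by
  have := IsAddTorsionFree.of_isTorsionFree ℝ A
  have hsq (i : Fin 4) : g i * g i = 0 := self_eq_neg.mp (hanti i i)
  have m1 : m {1} = g 1 := by simp [hm]
  have m12 : m {1, 2} = g 1 * g 2 := by simp (disch := decide) [hm, Finset.sort_insert]
  have m03 : m {0, 3} = g 0 * g 3 := by simp (disch := decide) [hm, Finset.sort_insert]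
  have m013 : m {0, 1, 3} = g 0 * (g 1 * g 3) := by
    simp (disch := decide) [hm, Finset.sort_insert]
  have m0123 : m {0, 1, 2, 3} = g 0 * (g 1 * g 2) * g 3 := by
    simp (disch := decide) [hm, Finset.sort_insert, mul_assoc]
  have hrange : LinearMap.range d ≤ Submodule.span ℝ (m '' {{0, 1}, {0, 1, 3}}) := by
    refine (LinearMap.range_le_span_pair_of_apply_eq_zero hspan d hd0).trans ?_
    rw [hdγ, hdγη, Submodule.span_le, Set.pair_subset_iff]
    exact ⟨neg_mem (Submodule.subset_span ⟨{0, 1}, by simp, rfl⟩),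
      neg_mem (Submodule.subset_span ⟨{0, 1, 3}, by simp, rfl⟩)⟩
  refine ⟨?_, ?_, ?_, ?_, ?_⟩
  · rw [← m12, ← m03, map_add, hd0 {1, 2} (by decide) (by decide),
      hd0 {0, 3} (by decide) (by decide), add_zero]
  · rw [add_mul_self_of_anticomm hanti hsq, ← mul_assoc, (commute_mul_of_anticomm hanti 1 2 0).eq,
      ← m0123]
    exact smul_ne_zero two_ne_zero (hindep.ne_zero _)
  · rw [← m1]
    exact hd0 {1} (by decide) (by decide)
  · intro x hx
    refine hindep.notMem_span_image (s := {{0, 1}, {0, 1, 3}}) (x := {1}) (by decide) ?_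
    exact m1 ▸ hx ▸ hrange ⟨x, rfl⟩
  · refine ⟨m {2, 3}, ?_⟩
    rw [hdγη, m013, add_mul, mul_mul_left_eq_zero_of_anticomm hanti hsq, zero_add, mul_assoc,
      hanti 3 1, mul_neg]
end

section
/- Let (ΛV, d) be a minimal Sullivan algebra which is the minimal model of a connected closed manifold of dimension m (so H^k(ΛV) = 0 for k > m). If (ΛV, d) is m-formal, then it is formal: defining N^i = V^i for i > m (with C^i = 0 there), every closed element of the ideal I(N) generated by N = ⊕N^i in ΛV is exact, so the DGSM criterion for formality is satisfied. -/
/-!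
Above degree `m` take `C^i = V^i ⊓ ker d` and for `N^i` any complement of it in `V^i`; up to
degree `m` keep the splitting given by `m`-formality. Since `d` has degree `+1`, a closed element
`z` of `I(N)` has closed homogeneous components, and it suffices to show each of them exact. A
component of degree `k ≤ m` only involves generators of degree `≤ k`, so it lies in the ideal
`N^{≤m} · ΛV^{≤m}` and is exact by `m`-formality; a component of degree `k > m` is exact because
`H^k = 0`.
-/

/-- The ideal `N^{≤s} · ΛV^{≤s}` generated by the non-closed generators
`N^{≤s}` inside the subalgebra generated by the generators of degree `≤ s`,
viewed as a subspace of the ambient algebra. -/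
def lowIdeal {A : Type*} [Ring A] [Algebra ℝ A]
    (N V : ℕ → Submodule ℝ A) (s : ℕ) : Submodule ℝ A :=
  Submodule.span ℝ {z : A | ∃ n ∈ ⨆ i, ⨆ (_ : i ≤ s), N i,
    ∃ x ∈ Algebra.adjoin ℝ (⋃ i, ⋃ (_ : i ≤ s), (V i : Set A)), z = n * x}

/-- `s`-formality (Definition 2.2) of an algebra with generating subspaces
`V i` of degree `i` and differential `d`: for each `i ≤ s` the space `V i`
splits as `C i ⊕ N i` with `d (C i) = 0`, `d` injective on `N i`, and every
closed element of the ideal `N^{≤s} · ΛV^{≤s}` exact in the whole algebra. -/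
def sFormal {A : Type*} [Ring A] [Algebra ℝ A]
    (V : ℕ → Submodule ℝ A) (d : A →ₗ[ℝ] A) (s : ℕ) : Prop :=
  ∃ C N : ℕ → Submodule ℝ A,
    (∀ i ≤ s, C i ⊔ N i = V i) ∧
    (∀ i ≤ s, C i ⊓ N i = ⊥) ∧
    (∀ i ≤ s, ∀ x ∈ C i, d x = 0) ∧
    (∀ i ≤ s, ∀ x ∈ N i, d x = 0 → x = 0) ∧
    (∀ z ∈ lowIdeal N V s, d z = 0 → ∃ w, d w = z)

/-- The ideal `I(N)` generated by all of `N = ⊕ᵢ N i` in the whole algebra. -/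
def fullIdeal {A : Type*} [Ring A] [Algebra ℝ A]
    (N : ℕ → Submodule ℝ A) : Submodule ℝ A :=
  Submodule.span ℝ {z : A | ∃ n ∈ ⨆ i, N i, ∃ x : A, z = n * x}

/-- Formality in the sense of the Deligne–Griffiths–Morgan–Sullivan criterion
(Theorem 2.1): `V = C ⊕ N` with `d C = 0`, `d` injective on `N`, and every
closed element of the ideal `I(N)` exact. -/
def formalDGMS {A : Type*} [Ring A] [Algebra ℝ A]
    (V : ℕ → Submodule ℝ A) (d : A →ₗ[ℝ] A) : Prop :=
  ∃ C N : ℕ → Submodule ℝ A,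
    (∀ i, C i ⊔ N i = V i) ∧
    (∀ i, C i ⊓ N i = ⊥) ∧
    (∀ i, ∀ x ∈ C i, d x = 0) ∧
    (∀ i, ∀ x ∈ N i, d x = 0 → x = 0) ∧
    (∀ z ∈ fullIdeal N, d z = 0 → ∃ w, d w = z)

open DirectSum

structure IsClosedSplitting {R M M' : Type*} [Semiring R] [AddCommMonoid M] [AddCommMonoid M']
    [Module R M] [Module R M'] (d : M →ₗ[R] M') (W C N : Submodule R M) : Prop where
  sup_eq : C ⊔ N = W
  inf_eq_bot : C ⊓ N = ⊥
  map_eq_zero : ∀ x ∈ C, d x = 0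
  eq_zero_of_map_eq_zero : ∀ x ∈ N, d x = 0 → x = 0

theorem IsClosedSplitting.right_le {R M M' : Type*} [Semiring R] [AddCommMonoid M]
    [AddCommMonoid M'] [Module R M] [Module R M'] {d : M →ₗ[R] M'} {W C N : Submodule R M}
    (h : IsClosedSplitting d W C N) : N ≤ W :=
  le_sup_right.trans_eq h.sup_eq

theorem exists_isClosedSplitting {K M M' : Type*} [DivisionRing K] [AddCommGroup M]
    [AddCommGroup M'] [Module K M] [Module K M'] (d : M →ₗ[K] M') (W : Submodule K M) :
    ∃ C N, IsClosedSplitting d W C N := by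
  obtain ⟨Q, hQ⟩ := Submodule.exists_isCompl (LinearMap.ker (d ∘ₗ W.subtype))
  refine ⟨(LinearMap.ker (d ∘ₗ W.subtype)).map W.subtype, Q.map W.subtype, ⟨?_, ?_, ?_, ?_⟩⟩
  · rw [← Submodule.map_sup, hQ.sup_eq_top, Submodule.map_subtype_top]
  · rw [← Submodule.map_inf _ W.injective_subtype, hQ.inf_eq_bot, Submodule.map_bot]
  · rintro _ ⟨y, hy, rfl⟩
    exact hy
  · rintro _ ⟨y, hy, rfl⟩ hdy
    have : y ∈ LinearMap.ker (d ∘ₗ W.subtype) ⊓ Q := ⟨hdy, hy⟩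
    rw [hQ.inf_eq_bot, Submodule.mem_bot] at this
    simp [this]

section Graded

variable {R A : Type*} [CommSemiring R] [Semiring A] [Algebra R A]
  (𝒜 : ℕ → Submodule R A) [GradedAlgebra 𝒜] {d : A →ₗ[R] A}

theorem decompose_map_of_degree_succ (hd : ∀ i, ∀ x ∈ 𝒜 i, d x ∈ 𝒜 (i + 1)) (k : ℕ) (z : A) :
    (decompose 𝒜 (d z) (k + 1) : A) = d (decompose 𝒜 z k) := by
  induction z using DirectSum.Decomposition.inductionOn 𝒜 with
  | zero => simp
  | add x y hx hy => simp [hx, hy]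
  | @homogeneous i x =>
    by_cases hik : i = k
    · subst hik
      rw [decompose_of_mem_same 𝒜 x.2, decompose_of_mem_same 𝒜 (hd i x x.2)]
    · rw [decompose_of_mem_ne 𝒜 x.2 hik, map_zero, decompose_of_mem_ne 𝒜 (hd i x x.2) (by omega)]

theorem map_decompose_eq_zero (hd : ∀ i, ∀ x ∈ 𝒜 i, d x ∈ 𝒜 (i + 1)) {z : A} (hz : d z = 0)
    (k : ℕ) : d (decompose 𝒜 z k) = 0 := by
  rw [← decompose_map_of_degree_succ 𝒜 hd, hz, decompose_zero, DirectSum.zero_apply,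
    Submodule.coe_zero]

theorem exists_map_eq_of_forall_decompose {z : A}
    (h : ∀ k, ∃ w, d w = decompose 𝒜 z k) : ∃ w, d w = z := by
  classical
  choose w hw using h
  refine ⟨∑ k ∈ (decompose 𝒜 z).support, w k, ?_⟩
  simp only [map_sum, hw, sum_support_decompose]

end Graded

theorem mem_adjoin_of_mem_of_le {A : Type*} [Ring A] [Algebra ℝ A] {𝒜 V : ℕ → Submodule ℝ A}
    (hgen : ∀ j, ∀ x ∈ 𝒜 j, x ∈ Algebra.adjoin ℝ (⋃ i, ⋃ (_ : i ≤ j), (V i : Set A)))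
    {j s : ℕ} (hjs : j ≤ s) {x : A} (hx : x ∈ 𝒜 j) :
    x ∈ Algebra.adjoin ℝ (⋃ i, ⋃ (_ : i ≤ s), (V i : Set A)) :=
  Algebra.adjoin_mono (Set.biUnion_subset_biUnion_left fun _ hi => le_trans hi hjs)
    (hgen j x hx)

section Ideals

variable {A : Type*} [Ring A] [Algebra ℝ A] (𝒜 : ℕ → Submodule ℝ A) [GradedRing 𝒜]
  {N V : ℕ → Submodule ℝ A}

theorem lowIdeal_congr {N' : ℕ → Submodule ℝ A} {s : ℕ} (h : ∀ i ≤ s, N i = N' i) :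
    lowIdeal N V s = lowIdeal N' V s := by
  simp only [lowIdeal, iSup_congr fun i => iSup_congr (h i)]

theorem decompose_mul_mem_lowIdeal (hN : ∀ i, N i ≤ 𝒜 i)
    (hgen : ∀ j, ∀ x ∈ 𝒜 j, x ∈ Algebra.adjoin ℝ (⋃ i, ⋃ (_ : i ≤ j), (V i : Set A)))
    {i k s : ℕ} (hks : k ≤ s) {n : A} (hn : n ∈ N i) (x : A) :
    (decompose 𝒜 (n * x) k : A) ∈ lowIdeal N V s := by
  by_cases hik : i ≤ k
  · rw [coe_decompose_mul_of_left_mem_of_le 𝒜 (hN i hn) hik]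
    refine Submodule.subset_span ⟨n, ?_, _, ?_, rfl⟩
    · exact Submodule.mem_iSup_of_mem i (Submodule.mem_iSup_of_mem (hik.trans hks) hn)
    · exact mem_adjoin_of_mem_of_le hgen (by omega) (SetLike.coe_mem _)
  · rw [coe_decompose_mul_of_left_mem_of_not_le 𝒜 (hN i hn) hik]
    exact zero_mem _

theorem decompose_mem_lowIdeal_of_mem_fullIdeal (hN : ∀ i, N i ≤ 𝒜 i)
    (hgen : ∀ j, ∀ x ∈ 𝒜 j, x ∈ Algebra.adjoin ℝ (⋃ i, ⋃ (_ : i ≤ j), (V i : Set A)))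
    {k s : ℕ} (hks : k ≤ s) {z : A} (hz : z ∈ fullIdeal N) :
    (decompose 𝒜 z k : A) ∈ lowIdeal N V s := by
  suffices fullIdeal N ≤ (lowIdeal N V s).comap (GradedAlgebra.proj 𝒜 k) from this hz
  rw [fullIdeal, Submodule.span_le]
  rintro _ ⟨n, hn, x, rfl⟩
  have : ⨆ i, N i ≤ ((lowIdeal N V s).comap (GradedAlgebra.proj 𝒜 k)).comap
      (LinearMap.mulRight ℝ x) :=
    iSup_le fun i n hn => decompose_mul_mem_lowIdeal 𝒜 hN hgen hks hn x
  exact this hn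

end Ideals

theorem stmt12_general {A : Type*} [Ring A] [Algebra ℝ A]
    (𝒜 : ℕ → Submodule ℝ A) [GradedRing 𝒜]
    (V : ℕ → Submodule ℝ A) (d : A →ₗ[ℝ] A) (m : ℕ)
    (hVA : ∀ i, V i ≤ 𝒜 i)
    (hgen : ∀ j, ∀ x ∈ 𝒜 j,
      x ∈ Algebra.adjoin ℝ (⋃ i, ⋃ (_ : i ≤ j), (V i : Set A)))
    (hdgr : ∀ i, ∀ x ∈ 𝒜 i, d x ∈ 𝒜 (i + 1))
    (hH : ∀ k, m < k → ∀ x ∈ 𝒜 k, d x = 0 → ∃ w, d w = x)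
    (h : sFormal V d m) : formalDGMS V d := by
  obtain ⟨C, N, hsup, hinf, hC, hN, hlow⟩ := h
  choose C₀ N₀ hsplit₀ using fun i => exists_isClosedSplitting d (V i)
  let C' i := if i ≤ m then C i else C₀ i
  let N' i := if i ≤ m then N i else N₀ i
  have hsplit : ∀ i, IsClosedSplitting d (V i) (C' i) (N' i) := fun i => by
    by_cases hi : i ≤ m
    · simpa only [C', N', if_pos hi] using ⟨hsup i hi, hinf i hi, hC i hi, hN i hi⟩
    · simpa only [C', N', if_neg hi] using hsplit₀ i
  refine ⟨C', N', fun i => (hsplit i).sup_eq, fun i => (hsplit i).inf_eq_bot,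
    fun i => (hsplit i).map_eq_zero, fun i => (hsplit i).eq_zero_of_map_eq_zero, ?_⟩
  intro z hz hdz
  have hlowIdeal : lowIdeal N' V m = lowIdeal N V m := lowIdeal_congr fun i hi => if_pos hi
  refine exists_map_eq_of_forall_decompose 𝒜 fun k => ?_
  have hclosed := map_decompose_eq_zero 𝒜 hdgr hdz k
  rcases le_or_gt k m with hk | hk
  · refine hlow _ ?_ hclosed
    rw [← hlowIdeal]
    exact decompose_mem_lowIdeal_of_mem_fullIdeal 𝒜
      (fun i => (hsplit i).right_le.trans (hVA i)) hgen hk hz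
  · exact hH k hk _ (SetLike.coe_mem _) hclosed

/-- Let `(ΛV, d)` be a minimal Sullivan algebra which is the
minimal model of a connected closed `m`-manifold, so it is graded by `𝒜`
(with `V i ⊆ 𝒜 i`, each `𝒜 j` generated by the generators of degree `≤ j`,
`d` of degree `+1`, `d ∘ d = 0`) and its cohomology vanishes above degree `m`
(every closed element of degree `> m` is exact).  If `(ΛV, d)` is `m`-formal,
then it is formal in the sense of the DGMS criterion. -/
theorem stmt12 {A : Type*} [Ring A] [Algebra ℝ A]
    (𝒜 : ℕ → Submodule ℝ A) [GradedRing 𝒜]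
    (V : ℕ → Submodule ℝ A) (d : A →ₗ[ℝ] A) (m : ℕ)
    (hVA : ∀ i, V i ≤ 𝒜 i)
    (hgen : ∀ j, ∀ x ∈ 𝒜 j,
      x ∈ Algebra.adjoin ℝ (⋃ i, ⋃ (_ : i ≤ j), (V i : Set A)))
    (hdgr : ∀ i, ∀ x ∈ 𝒜 i, d x ∈ 𝒜 (i + 1))
    (hd2 : ∀ x, d (d x) = 0)
    (hH : ∀ k, m < k → ∀ x ∈ 𝒜 k, d x = 0 → ∃ w, d w = x)
    (h : sFormal V d m) : formalDGMS V d :=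
  stmt12_general 𝒜 V d m hVA hgen hdgr hH h
end

section
/- Let (ΛV₁, d₁) and (ΛV₂, d₂) be minimal Sullivan algebras over ℝ that are s-formal, and let (ΛV, d) = (ΛV₁ ⊗ ΛV₂, d₁⊗1 + 1⊗d₂) be their tensor product (which is the minimal model of the product of the corresponding manifolds). Then (ΛV, d) is s-formal, with C^i = C₁^i ⊕ C₂^i and N^i = N₁^i ⊕ N₂^i. -/
set_option maxHeartbeats 1600000



open Submodule
set_option maxHeartbeats 1000000

/-- complement within a subspace -/
lemma aux_compl_within {E : Type*} [AddCommGroup E] [Module ℝ E]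
    (Q J : Submodule ℝ E) (hQJ : Q ≤ J) :
    ∃ J' : Submodule ℝ E, J' ≤ J ∧ J' ⊓ Q = ⊥ ∧ J' ⊔ Q = J := by
  obtain ⟨X, hX⟩ := Submodule.exists_isCompl (Q.comap J.subtype)
  refine ⟨X.map J.subtype, Submodule.map_subtype_le _ _, ?_, ?_⟩
  · have : Q = (Q.comap J.subtype).map J.subtype := by
      rw [Submodule.map_comap_subtype, inf_eq_right.2 hQJ]
    rw [this, ← Submodule.map_inf _ (Submodule.injective_subtype J), inf_comm,
      (disjoint_iff.1 hX.disjoint)]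
    simp
  · have : Q = (Q.comap J.subtype).map J.subtype := by
      rw [Submodule.map_comap_subtype, inf_eq_right.2 hQJ]
    rw [this, ← Submodule.map_sup, sup_comm, (codisjoint_iff.1 hX.codisjoint)]
    simp [Submodule.range_subtype]

/-- Hodge-type decomposition adapted to a subspace J whose closed part is exact. -/
lemma aux_hodge {E : Type*} [AddCommGroup E] [Module ℝ E]
    (d : E →ₗ[ℝ] E) (hd2 : ∀ x, d (d x) = 0)
    (J : Submodule ℝ E) (hJ : ∀ z ∈ J, d z = 0 → ∃ w, d w = z) :
    ∃ (H : Submodule ℝ E) (π : E →ₗ[ℝ] ↥H) (h : E →ₗ[ℝ] E),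
      (∀ x : ↥H, π ↑x = x) ∧ (∀ x ∈ H, d x = 0) ∧ (∀ b ∈ J, π b = 0) ∧
      (∀ b, ↑(π b) + d (h b) + h (d b) = b) := by
  classical
  set K := LinearMap.ker d with hK
  set Im := LinearMap.range d with hIm
  have hImK : Im ≤ K := by
    rintro x ⟨y, rfl⟩; simp [hK, LinearMap.mem_ker, hd2]
  have hJK : J ⊓ K ≤ Im := by
    rintro x ⟨hxJ, hxK⟩
    obtain ⟨w, hw⟩ := hJ x hxJ hxK
    exact ⟨w, hw⟩
  obtain ⟨J', hJ'le, hJ'inf, hJ'sup⟩ := aux_compl_within (J ⊓ K) J inf_le_left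
  have hJ'K : J' ⊓ K = ⊥ := by
    rw [eq_bot_iff, ← hJ'inf]
    exact le_inf inf_le_left (le_inf (le_trans inf_le_left hJ'le) inf_le_right)
  obtain ⟨U, hU⟩ := Submodule.exists_isCompl (K ⊔ J')
  set W := J' ⊔ U with hW
  have hWK_inf : W ⊓ K = ⊥ := by
    rw [eq_bot_iff]
    rintro x ⟨hxW, hxK⟩
    rw [hW] at hxW
    obtain ⟨j, hj, u, hu, rfl⟩ := Submodule.mem_sup.1 hxW
    have hu' : u ∈ (K ⊔ J') ⊓ U := by
      constructor
      · have : u = (j + u) - j := by abel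
        rw [this]
        exact Submodule.sub_mem _ (Submodule.mem_sup_left hxK)
          (Submodule.mem_sup_right hj)
      · exact hu
    rw [disjoint_iff.1 hU.disjoint] at hu'
    simp only [Submodule.mem_bot] at hu'
    subst hu'
    have : j ∈ J' ⊓ K := ⟨hj, by simpa using hxK⟩
    rw [hJ'K] at this
    simpa using this
  have hWK_sup : W ⊔ K = ⊤ := by
    rw [eq_top_iff]
    intro x _
    have hx : x ∈ (K ⊔ J') ⊔ U := by rw [codisjoint_iff.1 hU.codisjoint]; trivial
    obtain ⟨y, hy, u, hu, rfl⟩ := Submodule.mem_sup.1 hx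
    obtain ⟨k, hk, j, hj, rfl⟩ := Submodule.mem_sup.1 hy
    have h1 : j + u ∈ W := Submodule.add_mem _ (Submodule.mem_sup_left hj)
      (Submodule.mem_sup_right hu)
    have : k + j + u = (j + u) + k := by abel
    rw [this]
    exact Submodule.add_mem _ (Submodule.mem_sup_left h1) (Submodule.mem_sup_right hk)
  obtain ⟨H, hHle, hHinf, hHsup⟩ := aux_compl_within Im K hImK
  -- IsCompl H (W ⊔ Im)
  have hcH : IsCompl H (W ⊔ Im) := by
    constructor
    · rw [disjoint_iff, eq_bot_iff]
      rintro x ⟨hxH, hxWI⟩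
      obtain ⟨w, hw, e, he, rfl⟩ := Submodule.mem_sup.1 hxWI
      have hwWK : w ∈ W ⊓ K := by
        refine ⟨hw, ?_⟩
        have : w = (w + e) - e := by abel
        rw [this]
        exact Submodule.sub_mem _ (hHle hxH) (hImK he)
      rw [hWK_inf] at hwWK
      simp only [Submodule.mem_bot] at hwWK
      subst hwWK
      have : e ∈ H ⊓ Im := ⟨by simpa using hxH, he⟩
      rw [hHinf] at this
      simpa using this
    · rw [codisjoint_iff]
      rw [← sup_assoc, sup_comm H W, sup_assoc, hHsup, hWK_sup]
  have hcI : IsCompl Im (W ⊔ H) := by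
    constructor
    · rw [disjoint_iff, eq_bot_iff]
      rintro x ⟨hxI, hxWH⟩
      obtain ⟨w, hw, e, he, rfl⟩ := Submodule.mem_sup.1 hxWH
      have hwWK : w ∈ W ⊓ K := by
        refine ⟨hw, ?_⟩
        have : w = (w + e) - e := by abel
        rw [this]
        exact Submodule.sub_mem _ (hImK hxI) (hHle he)
      rw [hWK_inf] at hwWK
      simp only [Submodule.mem_bot] at hwWK
      subst hwWK
      have : e ∈ H ⊓ Im := ⟨he, by simpa using hxI⟩
      rw [hHinf] at this
      simpa using this
    · rw [codisjoint_iff]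
      rw [sup_comm W H, ← sup_assoc, sup_comm Im H, hHsup, sup_comm K W, hWK_sup]
  set π := H.linearProjOfIsCompl (W ⊔ Im) hcH with hπ
  set πI := Im.linearProjOfIsCompl (W ⊔ H) hcI with hπI
  -- d restricted to W, onto Im
  set dW : ↥W →ₗ[ℝ] ↥Im := (d.domRestrict W).codRestrict Im
    (fun c => ⟨(c : E), rfl⟩) with hdW
  have hdWb : Function.Bijective dW := by
    constructor
    · intro x y hxy
      have : d ((x : E) - y) = 0 := by
        have := congrArg (Subtype.val) hxy
        simp only [hdW, LinearMap.codRestrict_apply, LinearMap.domRestrict_apply] at this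
        change d (x : E) = d y at this
        rw [map_sub, this, sub_self]
      have hmem : (x : E) - y ∈ W ⊓ K := ⟨Submodule.sub_mem _ x.2 y.2, this⟩
      rw [hWK_inf] at hmem
      simp only [Submodule.mem_bot, sub_eq_zero] at hmem
      exact Subtype.ext hmem
    · rintro ⟨e, a, rfl⟩
      have : a ∈ W ⊔ K := by rw [hWK_sup]; trivial
      obtain ⟨w, hw, k, hk, rfl⟩ := Submodule.mem_sup.1 this
      refine ⟨⟨w, hw⟩, ?_⟩
      apply Subtype.ext
      simp only [hdW, LinearMap.codRestrict_apply, LinearMap.domRestrict_apply]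
      have : d k = 0 := hk
      simp [map_add, this]; rfl
  set eW := LinearEquiv.ofBijective dW hdWb with heW
  set h : E →ₗ[ℝ] E := W.subtype ∘ₗ (eW.symm : ↥Im →ₗ[ℝ] ↥W) ∘ₗ πI with hh
  have key_d_eW_symm : ∀ (e : ↥Im), d ((eW.symm e : ↥W) : E) = (e : E) := by
    intro e
    have := congrArg (Subtype.val) (eW.apply_symm_apply e)
    exact this
  refine ⟨H, π, h, ?_, ?_, ?_, ?_⟩
  · intro x; exact Submodule.linearProjOfIsCompl_apply_left hcH x
  · intro x hx; exact hHle hx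
  · intro b hb
    have hb' : b ∈ J' ⊔ (J ⊓ K) := by rw [hJ'sup]; exact hb
    obtain ⟨j, hj, q, hq, rfl⟩ := Submodule.mem_sup.1 hb'
    have h1 : π j = 0 := Submodule.linearProjOfIsCompl_apply_right hcH
      ⟨j, Submodule.mem_sup_left (Submodule.mem_sup_left hj)⟩
    have h2 : π q = 0 := Submodule.linearProjOfIsCompl_apply_right hcH
      ⟨q, Submodule.mem_sup_right (hJK hq)⟩
    rw [map_add, h1, h2, add_zero]
  · -- the homotopy identity
    intro b
    have hbtop : b ∈ W ⊔ (Im ⊔ H) := by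
      have : W ⊔ (Im ⊔ H) = ⊤ := by
        rw [sup_comm Im H, ← sup_assoc]
        rw [sup_assoc W H Im]
        rw [sup_comm H Im] at hHsup ⊢
        rw [hHsup]
        exact hWK_sup
      rw [this]; trivial
    obtain ⟨w, hw, x, hx, rfl⟩ := Submodule.mem_sup.1 hbtop
    obtain ⟨e, he, η, hη, rfl⟩ := Submodule.mem_sup.1 hx
    have hπw : π w = 0 := Submodule.linearProjOfIsCompl_apply_right hcH
      ⟨w, Submodule.mem_sup_left hw⟩
    have hπe : π e = 0 := Submodule.linearProjOfIsCompl_apply_right hcH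
      ⟨e, Submodule.mem_sup_right he⟩
    have hπη : (↑(π η) : E) = η := by
      exact congrArg Subtype.val (Submodule.projectionOnto_apply_left hcH ⟨η, hη⟩)
    have hπIw : πI w = 0 := Submodule.linearProjOfIsCompl_apply_right hcI
      ⟨w, Submodule.mem_sup_left hw⟩
    have hπIη : πI η = 0 := Submodule.linearProjOfIsCompl_apply_right hcI
      ⟨η, Submodule.mem_sup_right hη⟩
    have hπIe : πI e = ⟨e, he⟩ := Submodule.linearProjOfIsCompl_apply_left hcI ⟨e, he⟩
    have hde : d e = 0 := hImK he
    have hdη : d η = 0 := hHle hη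
    have hhw : h w = 0 := by simp [hh, hπIw]
    have hhη : h η = 0 := by simp [hh, hπIη]
    have hhe : d (h e) = e := by
      simp only [hh, LinearMap.coe_comp, LinearEquiv.coe_coe, Function.comp_apply, Submodule.coe_subtype]
      rw [hπIe]
      exact key_d_eW_symm ⟨e, he⟩
    have hhdw : h (d w) = w := by
      have hdwIm : d w ∈ Im := ⟨w, rfl⟩
      simp only [hh, LinearMap.coe_comp, LinearEquiv.coe_coe, Function.comp_apply, Submodule.coe_subtype]
      have h3 : πI (d w) = ⟨d w, hdwIm⟩ :=
        Submodule.linearProjOfIsCompl_apply_left hcI ⟨d w, hdwIm⟩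
      rw [h3]
      have : eW ⟨w, hw⟩ = ⟨d w, hdwIm⟩ := by
        apply Subtype.ext
        simp [heW, hdW, LinearEquiv.ofBijective_apply]; rfl
      have h2 : eW.symm ⟨d w, hdwIm⟩ = ⟨w, hw⟩ := by
        rw [← this, eW.symm_apply_apply]
      rw [h2]
    simp only [map_add, hπw, hπe, hhw, hhη, map_zero, hde, hdη, add_zero, zero_add]
    rw [hπη, hhe, hhdw]
    abel


set_option maxHeartbeats 1000000
open scoped DirectSum

/-- sign operator on a graded module -/
lemma aux_sign {A : Type*} [AddCommGroup A] [Module ℝ A]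
    (𝒜 : ℕ → Submodule ℝ A) [DirectSum.Decomposition 𝒜]
    (d : A →ₗ[ℝ] A) (hdgr : ∀ i, ∀ x ∈ 𝒜 i, d x ∈ 𝒜 (i + 1)) :
    ∃ ε : A →ₗ[ℝ] A,
      (∀ i, ∀ x ∈ 𝒜 i, ε x = ((-1 : ℝ) ^ i) • x) ∧
      (∀ x, ε (ε x) = x) ∧ (∀ x, ε (d x) = - d (ε x)) := by
  classical
  set D := DirectSum.decomposeLinearEquiv 𝒜 with hD
  set m : (⨁ i, ↥(𝒜 i)) →ₗ[ℝ] (⨁ i, ↥(𝒜 i)) :=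
    DFinsupp.mapRange.linearMap (fun i => ((-1 : ℝ) ^ i) • LinearMap.id) with hm
  set ε : A →ₗ[ℝ] A := D.symm.toLinearMap ∘ₗ m ∘ₗ D.toLinearMap with hε
  have hmem : ∀ i, ∀ x ∈ 𝒜 i, ε x = ((-1 : ℝ) ^ i) • x := by
    intro i x hx
    have h1 : D x = DirectSum.of (fun i => ↥(𝒜 i)) i ⟨x, hx⟩ :=
      DirectSum.decompose_of_mem 𝒜 hx
    have h2 : m (DirectSum.of (fun i => ↥(𝒜 i)) i ⟨x, hx⟩)
        = DirectSum.of (fun i => ↥(𝒜 i)) i (((-1 : ℝ) ^ i) • ⟨x, hx⟩) := by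
      simp only [hm, DFinsupp.mapRange.linearMap_apply]
      exact DFinsupp.mapRange_single (hf := by intro j; simp)
    have h3 : D.symm (DirectSum.of (fun i => ↥(𝒜 i)) i (((-1 : ℝ) ^ i) • ⟨x, hx⟩))
        = (((-1 : ℝ) ^ i) • (⟨x, hx⟩ : ↥(𝒜 i)) : ↥(𝒜 i)) := by
      simp [hD, DirectSum.decomposeLinearEquiv_symm_apply]
    simp only [hε, LinearMap.coe_comp, Function.comp_apply, LinearEquiv.coe_coe]
    rw [h1, h2, h3]
    rfl
  refine ⟨ε, hmem, ?_, ?_⟩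
  · intro x
    induction x using DirectSum.Decomposition.inductionOn 𝒜 with
    | zero => simp
    | @homogeneous i mm =>
        rw [hmem i _ mm.2, map_smul, hmem i _ mm.2, smul_smul, ← mul_pow]
        norm_num
    | add a b ha hb => rw [map_add, map_add, ha, hb]
  · intro x
    induction x using DirectSum.Decomposition.inductionOn 𝒜 with
    | zero => simp
    | @homogeneous i mm =>
        rw [hmem (i+1) _ (hdgr i _ mm.2), hmem i _ mm.2, map_smul, pow_succ]
        rw [← neg_smul]
        congr 1
        ring
    | add a b ha hb =>
        rw [map_add, map_add, map_add, map_add, ha, hb, neg_add]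

lemma aux_unit_functional {A : Type*} [AddCommGroup A] [Module ℝ A]
    {x : A} (hx : x ≠ 0) :
    ∃ φ : A →ₗ[ℝ] ℝ, φ x = 1 := by
  obtain ⟨Q, hQ⟩ := Submodule.exists_isCompl (Submodule.span ℝ {x})
  set e := LinearEquiv.toSpanNonzeroSingleton ℝ A x hx with he
  refine ⟨e.symm.toLinearMap ∘ₗ (Submodule.span ℝ {x}).linearProjOfIsCompl Q hQ, ?_⟩
  have hmem : x ∈ Submodule.span ℝ {x} := Submodule.mem_span_singleton_self x
  have hp : (Submodule.span ℝ {x}).linearProjOfIsCompl Q hQ x = ⟨x, hmem⟩ :=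
    Submodule.linearProjOfIsCompl_apply_left hQ ⟨x, hmem⟩
  simp only [LinearMap.coe_comp, Function.comp_apply, LinearEquiv.coe_coe]
  rw [hp]
  rw [LinearEquiv.symm_apply_eq]
  apply Subtype.ext
  simp [he, LinearEquiv.toSpanNonzeroSingleton]

/-- If `(ΛV₁, d₁)` and `(ΛV₂, d₂)` are `s`-formal minimal
Sullivan algebras, their tensor product `(ΛV₁ ⊗ ΛV₂, d₁⊗1 + 1⊗d₂)` is
`s`-formal.  The tensor product is modelled by an algebra `T` together with
injective graded algebra maps `f, g` commuting with the differentials,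
satisfying the Koszul commutation rule, whose induced linear map
`ΛV₁ ⊗ ΛV₂ → T` is bijective; its generating subspaces are
`VT i = f(V₁ i) ⊔ g(V₂ i)` and its differential `dT` is a signed derivation
with `dT ∘ f = f ∘ d₁` and `dT ∘ g = g ∘ d₂`. -/
theorem stmt13 {A₁ A₂ T : Type*}
    [Ring A₁] [Algebra ℝ A₁] [Ring A₂] [Algebra ℝ A₂] [Ring T] [Algebra ℝ T]
    (𝒜₁ : ℕ → Submodule ℝ A₁) (𝒜₂ : ℕ → Submodule ℝ A₂)
    (𝒯 : ℕ → Submodule ℝ T)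
    [GradedRing 𝒜₁] [GradedRing 𝒜₂] [GradedRing 𝒯]
    (V₁ : ℕ → Submodule ℝ A₁) (V₂ : ℕ → Submodule ℝ A₂)
    (d₁ : A₁ →ₗ[ℝ] A₁) (d₂ : A₂ →ₗ[ℝ] A₂) (dT : T →ₗ[ℝ] T)
    (hV₁ : ∀ i, V₁ i ≤ 𝒜₁ i) (hV₂ : ∀ i, V₂ i ≤ 𝒜₂ i)
    (hd₁gr : ∀ i, ∀ x ∈ 𝒜₁ i, d₁ x ∈ 𝒜₁ (i + 1))
    (hd₂gr : ∀ i, ∀ x ∈ 𝒜₂ i, d₂ x ∈ 𝒜₂ (i + 1))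
    (hd₁2 : ∀ x, d₁ (d₁ x) = 0) (hd₂2 : ∀ x, d₂ (d₂ x) = 0)
    (hLeib₁ : ∀ (i : ℕ) (x y : A₁), x ∈ 𝒜₁ i →
      d₁ (x * y) = d₁ x * y + ((-1 : ℝ) ^ i) • (x * d₁ y))
    (hLeib₂ : ∀ (i : ℕ) (x y : A₂), x ∈ 𝒜₂ i →
      d₂ (x * y) = d₂ x * y + ((-1 : ℝ) ^ i) • (x * d₂ y))
    (f : A₁ →ₐ[ℝ] T) (g : A₂ →ₐ[ℝ] T)
    (hfinj : Function.Injective f) (hginj : Function.Injective g)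
    (hfgr : ∀ i, ∀ x ∈ 𝒜₁ i, f x ∈ 𝒯 i) (hggr : ∀ i, ∀ x ∈ 𝒜₂ i, g x ∈ 𝒯 i)
    (hkoszul : ∀ i j : ℕ, ∀ x ∈ 𝒜₁ i, ∀ y ∈ 𝒜₂ j,
      g y * f x = ((-1 : ℝ) ^ (i * j)) • (f x * g y))
    (htens : Function.Bijective
      (TensorProduct.lift ((LinearMap.mul ℝ T).compl₁₂ f.toLinearMap g.toLinearMap)))
    (VT : ℕ → Submodule ℝ T)
    (hVT : ∀ i, VT i =
      Submodule.map f.toLinearMap (V₁ i) ⊔ Submodule.map g.toLinearMap (V₂ i))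
    (hdf : ∀ x, dT (f x) = f (d₁ x)) (hdg : ∀ x, dT (g x) = g (d₂ x))
    (hLeibT : ∀ (i : ℕ) (x y : T), x ∈ 𝒯 i →
      dT (x * y) = dT x * y + ((-1 : ℝ) ^ i) • (x * dT y))
    (s : ℕ) (h₁ : sFormal V₁ d₁ s) (h₂ : sFormal V₂ d₂ s) :
    sFormal VT dT s := by
  classical
  obtain ⟨C₁, N₁, hCN₁, hCNd₁, hdC₁, hdN₁, hex₁⟩ := h₁
  obtain ⟨C₂, N₂, hCN₂, hCNd₂, hdC₂, hdN₂, hex₂⟩ := h₂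
  set Φ := TensorProduct.lift ((LinearMap.mul ℝ T).compl₁₂ f.toLinearMap g.toLinearMap)
    with hΦdef
  have hΦtmul : ∀ (x : A₁) (y : A₂), Φ (x ⊗ₜ[ℝ] y) = f x * g y := by
    intro x y
    simp [hΦdef, TensorProduct.lift.tmul, LinearMap.compl₁₂_apply, LinearMap.mul_apply']
  have hN₁V : ∀ i ≤ s, N₁ i ≤ V₁ i := fun i hi => (hCN₁ i hi) ▸ le_sup_right
  have hN₂V : ∀ i ≤ s, N₂ i ≤ V₂ i := fun i hi => (hCN₂ i hi) ▸ le_sup_right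
  -- the key injectivity lemma for conditions 2 and 4
  have hNzero : ∀ i ≤ s, ∀ n₁ ∈ N₁ i, ∀ n₂ ∈ N₂ i,
      dT (f n₁ + g n₂) = 0 → n₁ = 0 ∧ n₂ = 0 := by
    intro i hi n₁ hn₁ n₂ hn₂ hd
    have hfu : f (d₁ n₁) + g (d₂ n₂) = 0 := by
      rw [← hdf, ← hdg, ← map_add]; exact hd
    by_cases h1A : (1 : A₂) = 0
    · -- A₂ and hence T trivial
      have hT : (1 : T) = 0 := by
        have := map_one g
        rw [h1A, map_zero] at this
        exact this.symm
      constructor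
      · apply hfinj; rw [map_zero]
        calc f n₁ = f n₁ * 1 := (mul_one _).symm
        _ = f n₁ * 0 := by rw [hT]
        _ = 0 := mul_zero _
      · apply hginj; rw [map_zero]
        calc g n₂ = g n₂ * 1 := (mul_one _).symm
        _ = g n₂ * 0 := by rw [hT]
        _ = 0 := mul_zero _
    · obtain ⟨φ, hφ⟩ := aux_unit_functional (A := A₂) (x := 1) h1A
      have h0 : Φ (d₁ n₁ ⊗ₜ[ℝ] 1 + (1 : A₁) ⊗ₜ[ℝ] d₂ n₂) = 0 := by
        rw [map_add, hΦtmul, hΦtmul, map_one, map_one, mul_one, one_mul]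
        exact hfu
      have h0' : d₁ n₁ ⊗ₜ[ℝ] (1 : A₂) + (1 : A₁) ⊗ₜ[ℝ] d₂ n₂ = 0 := by
        apply htens.1
        rw [h0, map_zero]
      have happ := congrArg ((TensorProduct.rid ℝ A₁).toLinearMap ∘ₗ
        TensorProduct.map LinearMap.id φ) h0'
      simp only [map_add, LinearMap.coe_comp, Function.comp_apply, LinearEquiv.coe_coe,
        TensorProduct.map_tmul, TensorProduct.rid_tmul, LinearMap.id_coe, id_eq,
        map_zero, hφ, one_smul] at happ
      -- happ : d₁ n₁ + φ (d₂ n₂) • 1 = 0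
      have hmem0 : d₁ n₁ ∈ 𝒜₁ 0 := by
        have h3 : d₁ n₁ = -(φ (d₂ n₂) • (1 : A₁)) := eq_neg_of_add_eq_zero_left happ
        rw [h3, ← neg_smul]
        exact Submodule.smul_mem _ _ (SetLike.one_mem_graded 𝒜₁)
      have hmemi : d₁ n₁ ∈ 𝒜₁ (i + 1) := hd₁gr i n₁ (hV₁ i (hN₁V i hi hn₁))
      have hd₁n₁ : d₁ n₁ = 0 := by
        have e1 := DirectSum.decompose_of_mem_same 𝒜₁ hmemi
        have e2 := DirectSum.decompose_of_mem_ne 𝒜₁ hmem0 (show (0:ℕ) ≠ i + 1 by simp)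
        rw [e2] at e1
        exact e1.symm
      have hn₁0 : n₁ = 0 := hdN₁ i hi n₁ hn₁ hd₁n₁
      refine ⟨hn₁0, ?_⟩
      apply hdN₂ i hi n₂ hn₂
      apply hginj
      rw [map_zero]
      have : f (d₁ n₁) = 0 := by rw [hd₁n₁, map_zero]
      rw [this, zero_add] at hfu
      exact hfu
  -- the splitting
  refine ⟨fun i => (C₁ i).map f.toLinearMap ⊔ (C₂ i).map g.toLinearMap,
    fun i => (N₁ i).map f.toLinearMap ⊔ (N₂ i).map g.toLinearMap, ?_, ?_, ?_, ?_, ?_⟩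
  · -- sup = VT
    intro i hi
    rw [hVT i, ← hCN₁ i hi, ← hCN₂ i hi, Submodule.map_sup, Submodule.map_sup]
    exact sup_sup_sup_comm _ _ _ _
  · -- trivial intersection
    intro i hi
    rw [eq_bot_iff]
    rintro z ⟨hzC, hzN⟩
    obtain ⟨a, ⟨c₁, hc₁, rfl⟩, b, ⟨c₂, hc₂, rfl⟩, hzeq⟩ := Submodule.mem_sup.1 hzC
    obtain ⟨a', ⟨n₁, hn₁, rfl⟩, b', ⟨n₂, hn₂, rfl⟩, hzeq'⟩ := Submodule.mem_sup.1 hzN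
    have hdz : dT z = 0 := by
      rw [← hzeq]
      simp only [AlgHom.toLinearMap_apply, map_add]
      rw [hdf, hdg, hdC₁ i hi c₁ hc₁, hdC₂ i hi c₂ hc₂, map_zero, map_zero, add_zero]
    rw [← hzeq'] at hdz
    simp only [AlgHom.toLinearMap_apply] at hdz hzeq'
    obtain ⟨e1, e2⟩ := hNzero i hi n₁ hn₁ n₂ hn₂ hdz
    simp only [Submodule.mem_bot]
    rw [← hzeq', e1, e2, map_zero, map_zero, add_zero]
  · -- d C = 0
    intro i hi z hz
    obtain ⟨a, ⟨c₁, hc₁, rfl⟩, b, ⟨c₂, hc₂, rfl⟩, hzeq⟩ := Submodule.mem_sup.1 hz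
    rw [← hzeq]
    simp only [AlgHom.toLinearMap_apply, map_add]
    rw [hdf, hdg, hdC₁ i hi c₁ hc₁, hdC₂ i hi c₂ hc₂, map_zero, map_zero, add_zero]
  · -- d injective on N
    intro i hi z hz hdz
    obtain ⟨a, ⟨n₁, hn₁, rfl⟩, b, ⟨n₂, hn₂, rfl⟩, hzeq⟩ := Submodule.mem_sup.1 hz
    simp only [AlgHom.toLinearMap_apply] at hzeq
    rw [← hzeq] at hdz
    obtain ⟨e1, e2⟩ := hNzero i hi n₁ hn₁ n₂ hn₂ hdz
    rw [← hzeq, e1, e2, map_zero, map_zero, add_zero]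
  · -- exactness
    intro z hz hdz
    -- sets of generators
    set sV₁ : Set A₁ := ⋃ i, ⋃ (_ : i ≤ s), (V₁ i : Set A₁) with hsV₁
    set sV₂ : Set A₂ := ⋃ i, ⋃ (_ : i ≤ s), (V₂ i : Set A₂) with hsV₂
    set I₁ := lowIdeal N₁ V₁ s with hI₁def
    set J₂ := lowIdeal N₂ V₂ s with hJ₂def
    have hM₁ : ∀ a ∈ Submonoid.closure sV₁, ∃ i, a ∈ 𝒜₁ i := by
      intro a ha
      induction ha using Submonoid.closure_induction with
      | mem x hx =>
          obtain ⟨i, hi⟩ := Set.mem_iUnion.1 hx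
          obtain ⟨his, hxi⟩ := Set.mem_iUnion.1 hi
          exact ⟨i, hV₁ i hxi⟩
      | one => exact ⟨0, SetLike.one_mem_graded 𝒜₁⟩
      | mul x y hx hy ihx ihy =>
          obtain ⟨i, hi⟩ := ihx; obtain ⟨j, hj⟩ := ihy
          exact ⟨i + j, SetLike.mul_mem_graded hi hj⟩
    have hM₂ : ∀ a ∈ Submonoid.closure sV₂, ∃ i, a ∈ 𝒜₂ i := by
      intro a ha
      induction ha using Submonoid.closure_induction with
      | mem x hx =>
          obtain ⟨i, hi⟩ := Set.mem_iUnion.1 hx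
          obtain ⟨his, hxi⟩ := Set.mem_iUnion.1 hi
          exact ⟨i, hV₂ i hxi⟩
      | one => exact ⟨0, SetLike.one_mem_graded 𝒜₂⟩
      | mul x y hx hy ihx ihy =>
          obtain ⟨i, hi⟩ := ihx; obtain ⟨j, hj⟩ := ihy
          exact ⟨i + j, SetLike.mul_mem_graded hi hj⟩
    have hcl₁ : ∀ a ∈ Submonoid.closure sV₁, a ∈ Algebra.adjoin ℝ sV₁ := by
      intro a ha
      have h2 : a ∈ Submodule.span ℝ (↑(Submonoid.closure sV₁) : Set A₁) :=
        Submodule.subset_span ha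
      rw [← Algebra.adjoin_eq_span] at h2
      exact h2
    have hcl₂ : ∀ a ∈ Submonoid.closure sV₂, a ∈ Algebra.adjoin ℝ sV₂ := by
      intro a ha
      have h2 : a ∈ Submodule.span ℝ (↑(Submonoid.closure sV₂) : Set A₂) :=
        Submodule.subset_span ha
      rw [← Algebra.adjoin_eq_span] at h2
      exact h2
    -- the subalgebra of "decomposable" elements
    set ST : Submodule ℝ T := Submodule.span ℝ
      {t | ∃ a ∈ Submonoid.closure sV₁, ∃ b ∈ Submonoid.closure sV₂, t = f a * g b} with hSTdef
    have h1ST : (1 : T) ∈ ST := Submodule.subset_span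
      ⟨1, one_mem _, 1, one_mem _, by rw [map_one, map_one, one_mul]⟩
    have hmulST : ∀ x y : T, x ∈ ST → y ∈ ST → x * y ∈ ST := by
      have hle : ST * ST ≤ ST := by
        rw [hSTdef, Submodule.span_mul_span]
        apply Submodule.span_le.2
        rintro z hz
        rw [Set.mem_mul] at hz
        obtain ⟨x, hx, y, hy, rfl⟩ := hz
        obtain ⟨a, ha, b, hb, rfl⟩ := hx
        obtain ⟨a', ha', b', hb', rfl⟩ := hy
        obtain ⟨jb, hjb⟩ := hM₂ b hb
        obtain ⟨ka, hka⟩ := hM₁ a' ha'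
        have hk := hkoszul ka jb a' hka b hjb
        have heq : (f a * g b) * (f a' * g b')
            = ((-1:ℝ)^(ka*jb)) • (f (a*a') * g (b*b')) := by
          rw [← mul_assoc, mul_assoc (f a) (g b) (f a'), hk, mul_smul_comm,
            smul_mul_assoc]
          congr 1
          rw [map_mul, map_mul, ← mul_assoc (f a) (f a') (g b),
            mul_assoc (f a * f a') (g b) (g b')]
        rw [heq]
        exact Submodule.smul_mem _ _ (Submodule.subset_span
          ⟨a * a', mul_mem ha ha', b * b', mul_mem hb hb', rfl⟩)
      intro x y hx hy
      exact hle (Submodule.mul_mem_mul hx hy)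
    have hadjle : ∀ x ∈ Algebra.adjoin ℝ (⋃ i, ⋃ (_ : i ≤ s), (VT i : Set T)),
        x ∈ ST := by
      have hle : Algebra.adjoin ℝ (⋃ i, ⋃ (_ : i ≤ s), (VT i : Set T))
          ≤ ST.toSubalgebra h1ST hmulST := by
        apply Algebra.adjoin_le
        intro v hv
        obtain ⟨i, hi⟩ := Set.mem_iUnion.1 hv
        obtain ⟨his, hvi⟩ := Set.mem_iUnion.1 hi
        rw [hVT i] at hvi
        obtain ⟨x1, ⟨v₁, hv₁, rfl⟩, x2, ⟨v₂, hv₂, rfl⟩, hveq⟩ := Submodule.mem_sup.1 hvi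
        have m1 : f v₁ ∈ ST := Submodule.subset_span
          ⟨v₁, Submonoid.subset_closure (Set.mem_iUnion.2 ⟨i, Set.mem_iUnion.2 ⟨his, hv₁⟩⟩),
            1, one_mem _, by rw [map_one, mul_one]⟩
        have m2 : g v₂ ∈ ST := Submodule.subset_span
          ⟨1, one_mem _, v₂, Submonoid.subset_closure
            (Set.mem_iUnion.2 ⟨i, Set.mem_iUnion.2 ⟨his, hv₂⟩⟩), by rw [map_one, one_mul]⟩
        show v ∈ ST
        rw [← hveq]
        exact Submodule.add_mem _ m1 m2
      intro x hx
      exact hle hx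
    -- the two pieces of the ideal in T
    set MI : Submodule ℝ T := Submodule.span ℝ
      {t | ∃ a ∈ I₁, ∃ b : A₂, t = f a * g b} with hMIdef
    set MJ : Submodule ℝ T := Submodule.span ℝ
      {t | ∃ a : A₁, ∃ b ∈ J₂, t = f a * g b} with hMJdef
    have hstep : z ∈ MI ⊔ MJ := by
      refine Submodule.span_induction ?_ ?_ ?_ ?_ hz
      · rintro t ⟨n, hn, x, hx, rfl⟩
        have hxST : x ∈ ST := hadjle x hx
        refine Submodule.iSup_induction
          (fun i => ⨆ (_ : i ≤ s), (Submodule.map f.toLinearMap (N₁ i)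
            ⊔ Submodule.map g.toLinearMap (N₂ i)))
          (motive := fun n => ∀ y ∈ ST, n * y ∈ MI ⊔ MJ) hn ?_ ?_ ?_ x hxST
        · intro i n hni
          by_cases hi : i ≤ s
          · have hni' : n ∈ Submodule.map f.toLinearMap (N₁ i)
                ⊔ Submodule.map g.toLinearMap (N₂ i) := by
              simpa [iSup_pos hi] using hni
            clear hni
            rename' hni' => hni
            obtain ⟨x1, ⟨n₁, hn₁, rfl⟩, x2, ⟨n₂, hn₂, rfl⟩, hneq⟩ := Submodule.mem_sup.1 hni
            intro y hy
            refine Submodule.span_induction ?_ ?_ ?_ ?_ hy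
              (p := fun y _ => n * y ∈ MI ⊔ MJ)
            · rintro t ⟨a, hacl, b, hbcl, rfl⟩
              rw [← hneq]
              simp only [AlgHom.toLinearMap_apply]
              rw [add_mul]
              have hn₁sup : n₁ ∈ ⨆ i, ⨆ (_ : i ≤ s), N₁ i :=
                Submodule.mem_iSup_of_mem i (Submodule.mem_iSup_of_mem hi hn₁)
              have hn₂sup : n₂ ∈ ⨆ i, ⨆ (_ : i ≤ s), N₂ i :=
                Submodule.mem_iSup_of_mem i (Submodule.mem_iSup_of_mem hi hn₂)
              have t1 : f n₁ * (f a * g b) ∈ MI := by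
                rw [← mul_assoc, ← map_mul]
                exact Submodule.subset_span ⟨n₁ * a,
                  Submodule.subset_span ⟨n₁, hn₁sup, a, hcl₁ a hacl, rfl⟩, b, rfl⟩
              have t2 : g n₂ * (f a * g b) ∈ MJ := by
                obtain ⟨ka, hka⟩ := hM₁ a hacl
                have hn₂A : n₂ ∈ 𝒜₂ i := hV₂ i (hN₂V i hi hn₂)
                rw [← mul_assoc, hkoszul ka i a hka n₂ hn₂A, smul_mul_assoc,
                  mul_assoc, ← map_mul]
                exact Submodule.smul_mem _ _ (Submodule.subset_span ⟨a, n₂ * b,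
                  Submodule.subset_span ⟨n₂, hn₂sup, b, hcl₂ b hbcl, rfl⟩, rfl⟩)
              exact Submodule.add_mem _ (Submodule.mem_sup_left t1)
                (Submodule.mem_sup_right t2)
            · show n * (0 : T) ∈ MI ⊔ MJ
              rw [mul_zero]; exact Submodule.zero_mem _
            · intro u v _ _ hu hv
              show n * (u + v) ∈ MI ⊔ MJ
              rw [mul_add]; exact Submodule.add_mem _ hu hv
            · intro r u _ hu
              show n * (r • u) ∈ MI ⊔ MJ
              rw [mul_smul_comm]; exact Submodule.smul_mem _ _ hu
          · have hni' : n = 0 := by simpa [iSup_neg hi] using hni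
            intro y hy; rw [hni', zero_mul]; exact Submodule.zero_mem _
        · intro y hy; rw [zero_mul]; exact Submodule.zero_mem _
        · intro n m hn' hm' y hy
          rw [add_mul]; exact Submodule.add_mem _ (hn' y hy) (hm' y hy)
      · exact Submodule.zero_mem _
      · intro u v _ _ hu hv; exact Submodule.add_mem _ hu hv
      · intro r u _ hu; exact Submodule.smul_mem _ _ hu
    -- sign operator and tensor differential
    obtain ⟨ε, hεmem, hεε, hεd⟩ := aux_sign 𝒜₁ d₁ hd₁gr
    set D' : TensorProduct ℝ A₁ A₂ →ₗ[ℝ] TensorProduct ℝ A₁ A₂ :=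
      TensorProduct.map d₁ LinearMap.id + TensorProduct.map ε d₂ with hD'def
    have hD'tmul : ∀ (x : A₁) (y : A₂),
        D' (x ⊗ₜ[ℝ] y) = d₁ x ⊗ₜ[ℝ] y + ε x ⊗ₜ[ℝ] d₂ y := by
      intro x y
      simp [hD'def, TensorProduct.map_tmul]
    have hsq : ∀ i : ℕ, ((-1:ℝ)^i) * ((-1:ℝ)^i) = 1 := by
      intro i; rw [← mul_pow]; norm_num
    have hsucc : ∀ i : ℕ, ((-1:ℝ)^(i+1)) = -((-1:ℝ)^i) := by
      intro i; rw [pow_succ]; ring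
    have hD'tmulh : ∀ (i : ℕ) (x : A₁), x ∈ 𝒜₁ i → ∀ (y : A₂),
        D' (x ⊗ₜ[ℝ] y) = d₁ x ⊗ₜ[ℝ] y + ((-1:ℝ)^i) • (x ⊗ₜ[ℝ] d₂ y) := by
      intro i x hx y
      rw [hD'tmul, hεmem i x hx, TensorProduct.smul_tmul']
    have hΦD : ∀ t, dT (Φ t) = Φ (D' t) := by
      intro t
      induction t using TensorProduct.induction_on with
      | zero => simp
      | tmul x y =>
          induction x using DirectSum.Decomposition.inductionOn 𝒜₁ with
          | zero => simp [TensorProduct.zero_tmul]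
          | homogeneous m =>
              rename_i i
              rw [hΦtmul, hLeibT i _ _ (hfgr i _ m.2), hdf, hdg,
                hD'tmulh i _ m.2, map_add, hΦtmul, map_smul, hΦtmul]
          | add a b ha hb =>
              rw [TensorProduct.add_tmul, map_add, map_add, ha, hb, ← map_add]
              exact congrArg Φ (map_add D' _ _).symm
      | add a b ha hb =>
          rw [map_add, map_add, ha, hb, ← map_add]
          exact congrArg Φ (map_add D' _ _).symm
    have hD'2 : ∀ t, D' (D' t) = 0 := by
      intro t
      induction t using TensorProduct.induction_on with
      | zero => simp
      | tmul x y =>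
          induction x using DirectSum.Decomposition.inductionOn 𝒜₁ with
          | zero => simp [TensorProduct.zero_tmul]
          | homogeneous m =>
              rename_i i
              rw [hD'tmulh i _ m.2, map_add, map_smul,
                hD'tmulh (i+1) _ (hd₁gr i _ m.2), hD'tmulh i _ m.2,
                hd₁2, hd₂2, TensorProduct.zero_tmul, TensorProduct.tmul_zero,
                smul_zero, add_zero, zero_add, hsucc, neg_smul, neg_add_cancel]
          | add a b ha hb =>
              rw [TensorProduct.add_tmul, map_add, map_add, ha, hb, add_zero]
      | add a b ha hb => rw [map_add, map_add, ha, hb, add_zero]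
    -- Hodge decomposition on A₂ adapted to J₂
    obtain ⟨H, π, hB, hπid, hHker, hπJ, hhom⟩ := aux_hodge d₂ hd₂2 J₂ hex₂
    set P : A₂ →ₗ[ℝ] A₂ := H.subtype ∘ₗ π with hPdef
    have hPval : ∀ b, P b = ↑(π b) := fun b => rfl
    have hPmem : ∀ b, P b ∈ H := fun b => (π b).2
    have hPd : ∀ b, d₂ (P b) = 0 := fun b => hHker _ (hPmem b)
    have hPJ0 : ∀ b ∈ J₂, P b = 0 := by
      intro b hb; rw [hPval, hπJ b hb]; rfl
    have hhom' : ∀ b, P b + d₂ (hB b) + hB (d₂ b) = b := fun b => hhom b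
    set K₁ : TensorProduct ℝ A₁ A₂ →ₗ[ℝ] TensorProduct ℝ A₁ A₂ :=
      TensorProduct.map ε hB with hK₁def
    have hKey : ∀ t, D' (K₁ t) + K₁ (D' t)
        = t - TensorProduct.map LinearMap.id P t := by
      have hK₁tmul : ∀ (x : A₁) (y' : A₂),
          K₁ (x ⊗ₜ[ℝ] y') = ε x ⊗ₜ[ℝ] hB y' := by
        intro x y'; simp [hK₁def, TensorProduct.map_tmul]
      intro t
      induction t using TensorProduct.induction_on with
      | zero => simp
      | tmul x y =>
          induction x using DirectSum.Decomposition.inductionOn 𝒜₁ with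
          | zero => simp [TensorProduct.zero_tmul]
          | homogeneous m =>
              rename_i i
              set x : A₁ := ↑m with hx
              have hxi : x ∈ 𝒜₁ i := m.2
              have e2 : D' (K₁ (x ⊗ₜ[ℝ] y))
                  = ((-1:ℝ)^i) • (d₁ x ⊗ₜ[ℝ] hB y) + x ⊗ₜ[ℝ] d₂ (hB y) := by
                rw [hK₁tmul, hεmem i _ hxi, ← TensorProduct.smul_tmul', map_smul,
                  hD'tmulh i _ hxi, smul_add, smul_smul, hsq, one_smul]
              have e4 : K₁ (D' (x ⊗ₜ[ℝ] y))
                  = -(((-1:ℝ)^i) • (d₁ x ⊗ₜ[ℝ] hB y)) + x ⊗ₜ[ℝ] hB (d₂ y) := by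
                rw [hD'tmulh i _ hxi, map_add, map_smul, hK₁tmul, hK₁tmul,
                  hεmem (i+1) _ (hd₁gr i _ hxi), hεmem i _ hxi, hsucc, neg_smul,
                  TensorProduct.neg_tmul, ← TensorProduct.smul_tmul', ← TensorProduct.smul_tmul',
                  smul_smul, hsq, one_smul]
              have e5 : d₂ (hB y) + hB (d₂ y) = y - P y := by
                have h' : P y + (d₂ (hB y) + hB (d₂ y)) = y := by
                  rw [← add_assoc]; exact hhom' y
                exact eq_sub_of_add_eq' h'
              have e6 : x ⊗ₜ[ℝ] d₂ (hB y) + x ⊗ₜ[ℝ] hB (d₂ y)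
                  = x ⊗ₜ[ℝ] y - x ⊗ₜ[ℝ] P y := by
                rw [← TensorProduct.tmul_add, e5, TensorProduct.tmul_sub]
              rw [e2, e4, TensorProduct.map_tmul]
              simp only [LinearMap.id_coe, id_eq]
              rw [← e6]
              abel
          | add a b ha hb =>
              rw [TensorProduct.add_tmul]
              simp only [map_add]
              calc D' (K₁ (a ⊗ₜ[ℝ] y)) + D' (K₁ (b ⊗ₜ[ℝ] y))
                    + (K₁ (D' (a ⊗ₜ[ℝ] y)) + K₁ (D' (b ⊗ₜ[ℝ] y)))
                  = (D' (K₁ (a ⊗ₜ[ℝ] y)) + K₁ (D' (a ⊗ₜ[ℝ] y)))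
                    + (D' (K₁ (b ⊗ₜ[ℝ] y)) + K₁ (D' (b ⊗ₜ[ℝ] y))) := by abel
                _ = (a ⊗ₜ[ℝ] y - TensorProduct.map LinearMap.id P (a ⊗ₜ[ℝ] y))
                    + (b ⊗ₜ[ℝ] y - TensorProduct.map LinearMap.id P (b ⊗ₜ[ℝ] y)) := by
                    rw [ha, hb]
                _ = _ := by abel
      | add a b ha hb =>
          simp only [map_add]
          calc D' (K₁ a) + D' (K₁ b) + (K₁ (D' a) + K₁ (D' b))
              = (D' (K₁ a) + K₁ (D' a)) + (D' (K₁ b) + K₁ (D' b)) := by abel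
            _ = (a - TensorProduct.map LinearMap.id P a)
                + (b - TensorProduct.map LinearMap.id P b) := by rw [ha, hb]
            _ = _ := by abel
    -- transport to the tensor product
    set MI' : Submodule ℝ (TensorProduct ℝ A₁ A₂) := Submodule.span ℝ
      {t | ∃ a ∈ I₁, ∃ b : A₂, t = a ⊗ₜ[ℝ] b} with hMI'def
    set MJ' : Submodule ℝ (TensorProduct ℝ A₁ A₂) := Submodule.span ℝ
      {t | ∃ a : A₁, ∃ b ∈ J₂, t = a ⊗ₜ[ℝ] b} with hMJ'def
    have hmapI : Submodule.map Φ MI' = MI := by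
      rw [hMI'def, Submodule.map_span, hMIdef]
      congr 1
      ext t
      constructor
      · rintro ⟨u, ⟨a, ha, b, rfl⟩, rfl⟩
        exact ⟨a, ha, b, (hΦtmul a b).symm⟩
      · rintro ⟨a, ha, b, rfl⟩
        exact ⟨a ⊗ₜ[ℝ] b, ⟨a, ha, b, rfl⟩, hΦtmul a b⟩
    have hmapJ : Submodule.map Φ MJ' = MJ := by
      rw [hMJ'def, Submodule.map_span, hMJdef]
      congr 1
      ext t
      constructor
      · rintro ⟨u, ⟨a, b, hb, rfl⟩, rfl⟩
        exact ⟨a, b, hb, (hΦtmul a b).symm⟩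
      · rintro ⟨a, b, hb, rfl⟩
        exact ⟨a ⊗ₜ[ℝ] b, ⟨a, b, hb, rfl⟩, hΦtmul a b⟩
    have hzM : z ∈ Submodule.map Φ (MI' ⊔ MJ') := by
      rw [Submodule.map_sup, hmapI, hmapJ]; exact hstep
    obtain ⟨t, ht, hΦt⟩ := hzM
    have hD't : D' t = 0 := by
      apply htens.1
      rw [map_zero, ← hΦD, hΦt, hdz]
    obtain ⟨ti, hti, tj, htj, htsum⟩ := Submodule.mem_sup.1 ht
    set z₁ := TensorProduct.map LinearMap.id P t with hz₁def
    set MIH : Submodule ℝ (TensorProduct ℝ A₁ A₂) := Submodule.span ℝ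
      {t | ∃ a ∈ I₁, ∃ b ∈ H, t = a ⊗ₜ[ℝ] b} with hMIHdef
    have hz₁MIH : z₁ ∈ MIH := by
      rw [hz₁def, ← htsum, map_add]
      have h1 : TensorProduct.map LinearMap.id P ti ∈ MIH := by
        have hle : Submodule.map (TensorProduct.map LinearMap.id P) MI' ≤ MIH := by
          rw [hMI'def, Submodule.map_span]
          apply Submodule.span_le.2
          rintro u ⟨v, ⟨a, ha, b, rfl⟩, rfl⟩
          rw [TensorProduct.map_tmul]
          exact Submodule.subset_span ⟨a, ha, P b, hPmem b, rfl⟩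
        exact hle ⟨ti, hti, rfl⟩
      have h2 : TensorProduct.map LinearMap.id P tj = 0 := by
        have hle : Submodule.map (TensorProduct.map LinearMap.id P) MJ' ≤ ⊥ := by
          rw [hMJ'def, Submodule.map_span]
          apply Submodule.span_le.2
          rintro u ⟨v, ⟨a, b, hb, rfl⟩, rfl⟩
          rw [TensorProduct.map_tmul, hPJ0 b hb, TensorProduct.tmul_zero]
          exact Submodule.zero_mem _
        have := hle ⟨tj, htj, rfl⟩
        rwa [Submodule.mem_bot] at this
      rw [h2, add_zero]
      exact h1
    have hz₁D' : D' z₁ = 0 := by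
      have h5 := hKey t
      rw [hD't, map_zero, add_zero] at h5
      have : z₁ = t - D' (K₁ t) := by rw [h5, hz₁def]; abel
      rw [this, map_sub, hD't, hD'2, sub_zero]
    have hεdz₁ : TensorProduct.map ε d₂ z₁ = 0 := by
      have hle : Submodule.map (TensorProduct.map ε d₂) MIH ≤ ⊥ := by
        rw [hMIHdef, Submodule.map_span]
        apply Submodule.span_le.2
        rintro u ⟨v, ⟨a, ha, b, hb, rfl⟩, rfl⟩
        rw [TensorProduct.map_tmul, hHker b hb, TensorProduct.tmul_zero]
        exact Submodule.zero_mem _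
      have := hle ⟨z₁, hz₁MIH, rfl⟩
      rwa [Submodule.mem_bot] at this
    have hdz₁ : TensorProduct.map d₁ LinearMap.id z₁ = 0 := by
      have h6 : TensorProduct.map d₁ LinearMap.id z₁
          + TensorProduct.map ε d₂ z₁ = 0 := by
        rw [← LinearMap.add_apply, ← hD'def]
        exact hz₁D'
      rw [hεdz₁, add_zero] at h6
      exact h6
    -- coordinates with respect to a basis of H
    set c := Module.Basis.ofVectorSpace ℝ ↥H with hcdef
    set φc : ↥(Module.Basis.ofVectorSpaceIndex ℝ ↥H) → (A₂ →ₗ[ℝ] ℝ) :=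
      fun j => (c.coord j) ∘ₗ π with hφcdef
    set Cc : ↥(Module.Basis.ofVectorSpaceIndex ℝ ↥H) → (TensorProduct ℝ A₁ A₂ →ₗ[ℝ] A₁) :=
      fun j => (TensorProduct.rid ℝ A₁).toLinearMap
        ∘ₗ TensorProduct.map LinearMap.id (φc j) with hCcdef
    have hCtmul : ∀ j (a : A₁) (b : A₂), Cc j (a ⊗ₜ[ℝ] b) = φc j b • a := by
      intro j a b
      simp [hCcdef, TensorProduct.map_tmul, TensorProduct.rid_tmul]
    have hφmem : ∀ j (b : A₂) (hb : b ∈ H), φc j b = c.repr ⟨b, hb⟩ j := by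
      intro j b hb
      have : π b = ⟨b, hb⟩ := hπid ⟨b, hb⟩
      simp [hφcdef, this, Module.Basis.coord_apply]
    have hCd : ∀ j t', Cc j (TensorProduct.map d₁ LinearMap.id t') = d₁ (Cc j t') := by
      intro j t'
      induction t' using TensorProduct.induction_on with
      | zero => simp
      | tmul a b =>
          rw [TensorProduct.map_tmul, hCtmul, hCtmul]
          simp only [LinearMap.id_coe, id_eq]
          rw [map_smul]
      | add a b ha hb => simp only [map_add, ha, hb]
    have hCImem : ∀ j, ∀ t' ∈ MIH, Cc j t' ∈ I₁ := by
      intro j t' ht'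
      refine Submodule.span_induction ?_ ?_ ?_ ?_ ht'
      · rintro u ⟨a, ha, b, hb, rfl⟩
        rw [hCtmul]
        exact Submodule.smul_mem _ _ ha
      · rw [map_zero]; exact Submodule.zero_mem _
      · intro u v _ _ hu hv; rw [map_add]; exact Submodule.add_mem _ hu hv
      · intro r u _ hu; rw [map_smul]; exact Submodule.smul_mem _ _ hu
    have hL1 : ∀ t' ∈ MIH, ∃ σ : Finset ↥(Module.Basis.ofVectorSpaceIndex ℝ ↥H),
        (∀ j ∉ σ, Cc j t' = 0) ∧
        t' = ∑ j ∈ σ, (Cc j t') ⊗ₜ[ℝ] ((c j : ↥H) : A₂) := by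
      intro t' ht'
      refine Submodule.span_induction ?_ ?_ ?_ ?_ ht'
      · rintro u ⟨a, ha, b, hb, rfl⟩
        refine ⟨(c.repr ⟨b, hb⟩).support, ?_, ?_⟩
        · intro j hj
          rw [hCtmul, hφmem j b hb, Finsupp.notMem_support_iff.1 hj, zero_smul]
        · have hrep := Module.Basis.linearCombination_repr c ⟨b, hb⟩
          rw [Finsupp.linearCombination_apply, Finsupp.sum] at hrep
          have hb' : b = ((∑ j ∈ (c.repr ⟨b, hb⟩).support,
              (c.repr ⟨b, hb⟩) j • c j : ↥H) : A₂) := by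
            rw [hrep]
          have hcoe : ((∑ j ∈ (c.repr ⟨b, hb⟩).support,
              (c.repr ⟨b, hb⟩) j • c j : ↥H) : A₂)
              = ∑ j ∈ (c.repr ⟨b, hb⟩).support,
                (c.repr ⟨b, hb⟩) j • ((c j : ↥H) : A₂) := by
            rw [← Submodule.coe_subtype, map_sum]
            apply Finset.sum_congr rfl
            intro j _
            rw [map_smul]
          calc a ⊗ₜ[ℝ] b
              = a ⊗ₜ[ℝ] ((∑ j ∈ (c.repr ⟨b, hb⟩).support,
                (c.repr ⟨b, hb⟩) j • c j : ↥H) : A₂) := by rw [← hb']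
            _ = ∑ j ∈ (c.repr ⟨b, hb⟩).support,
                (c.repr ⟨b, hb⟩) j • (a ⊗ₜ[ℝ] ((c j : ↥H) : A₂)) := by
                rw [hcoe, TensorProduct.tmul_sum]
                apply Finset.sum_congr rfl
                intro j _
                rw [TensorProduct.tmul_smul]
            _ = ∑ j ∈ (c.repr ⟨b, hb⟩).support,
                (Cc j (a ⊗ₜ[ℝ] b)) ⊗ₜ[ℝ] ((c j : ↥H) : A₂) := by
                apply Finset.sum_congr rfl
                intro j hj
                rw [hCtmul, hφmem j b hb, TensorProduct.smul_tmul']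
      · exact ⟨∅, by intro j _; rw [map_zero], by simp⟩
      · rintro u v hu hv ⟨σu, hu0, husum⟩ ⟨σv, hv0, hvsum⟩
        refine ⟨σu ∪ σv, ?_, ?_⟩
        · intro j hj
          rw [Finset.mem_union] at hj
          push_neg at hj
          rw [map_add, hu0 j hj.1, hv0 j hj.2, add_zero]
        · have hu' : ∑ j ∈ σu ∪ σv, (Cc j u) ⊗ₜ[ℝ] ((c j : ↥H) : A₂) = u := by
            rw [← Finset.sum_subset Finset.subset_union_left
              (fun j _ hj => by rw [hu0 j hj, TensorProduct.zero_tmul])]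
            exact husum.symm
          have hv' : ∑ j ∈ σu ∪ σv, (Cc j v) ⊗ₜ[ℝ] ((c j : ↥H) : A₂) = v := by
            rw [← Finset.sum_subset Finset.subset_union_right
              (fun j _ hj => by rw [hv0 j hj, TensorProduct.zero_tmul])]
            exact hvsum.symm
          calc u + v = ∑ j ∈ σu ∪ σv, ((Cc j u) ⊗ₜ[ℝ] ((c j : ↥H) : A₂)
                + (Cc j v) ⊗ₜ[ℝ] ((c j : ↥H) : A₂)) := by
                rw [Finset.sum_add_distrib, hu', hv']
            _ = _ := by
                apply Finset.sum_congr rfl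
                intro j _
                rw [map_add, TensorProduct.add_tmul]
      · rintro r u hu ⟨σu, hu0, husum⟩
        refine ⟨σu, ?_, ?_⟩
        · intro j hj
          rw [map_smul, hu0 j hj, smul_zero]
        · calc r • u
              = ∑ j ∈ σu, r • ((Cc j u) ⊗ₜ[ℝ] ((c j : ↥H) : A₂)) := by
                rw [← Finset.smul_sum, ← husum]
            _ = _ := by
                apply Finset.sum_congr rfl
                intro j _
                rw [map_smul, TensorProduct.smul_tmul']
    obtain ⟨σ, hσ0, hσsum⟩ := hL1 z₁ hz₁MIH
    have hwj : ∀ j, ∃ w, d₁ w = Cc j z₁ := by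
      intro j
      apply hex₁ _ (hCImem j z₁ hz₁MIH)
      rw [← hCd, hdz₁, map_zero]
    choose w hw using hwj
    set u := ∑ j ∈ σ, (w j) ⊗ₜ[ℝ] ((c j : ↥H) : A₂) with hudef
    have hD'u : D' u = z₁ := by
      have : D' u = ∑ j ∈ σ, (Cc j z₁) ⊗ₜ[ℝ] ((c j : ↥H) : A₂) := by
        rw [hudef, map_sum]
        apply Finset.sum_congr rfl
        intro j _
        rw [hD'tmul, hw j, hHker _ (c j).2, TensorProduct.tmul_zero, add_zero]
      rw [this]
      exact hσsum.symm
    refine ⟨Φ (K₁ t + u), ?_⟩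
    rw [hΦD, map_add, hD'u]
    have h5 := hKey t
    rw [hD't, map_zero, add_zero] at h5
    rw [h5, ← hz₁def]
    have : t - z₁ + z₁ = t := by abel
    rw [this, hΦt]
end
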